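/- arXiv:1705.03296 — 4 statements merged into one kernel-verified Lean document; each statement's English description precedes it below -/
import Mathlib

section
/- Let 1 < p < ∞, let (Ω, μ) be a measure space with L^p(Ω, μ; ℂ) ≠ {0}, and let 𝒢 = (V, ω) be a connected finite weighted graph with all degrees positive. Then π_{p,𝒢}(L^p(Ω, μ; ℂ)) = π_{p,𝒢}(ℂ). -/
/-!
A unit vector `g ∈ L^p(μ)` embeds `ℂ` isometrically by `c ↦ c • g`, and at each point `a` the
distance from `f(·) g(a)` to a constant is `|g(a)|` times the distance from `f` to a constant;
integrating over `a`, an `L^p`-valued Poincaré inequality restricts to the scalar one.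
Conversely, by Fubini `‖f - x‖^p` in `L^p(ν; L^p(μ))` is the integral over `a` of the scalar
quantities `‖f(·)(a) - x(a)‖^p` in `L^p(ν)`, so it suffices to apply the scalar inequality at every
point with a near-optimal constant `x(a)`. A dense sequence in `ℂ` makes this choice measurable,
and a slack proportional to `‖f(·)(a)‖^p` keeps `x` in `L^p`.
-/

open scoped BigOperators
open Finset MeasureTheory

noncomputable section

variable {V : Type*}

def wdeg [Fintype V] (ω : V → V → ℝ) (s : V) : ℝ := ∑ t, ω s t

def nu [Fintype V] (ω : V → V → ℝ) (s : V) : ℝ := wdeg ω s / ∑ t, wdeg ω t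

def edgeP [Fintype V] (ω : V → V → ℝ) (s t : V) : ℝ := ω s t / ∑ u, ∑ v, ω u v

def SymmW (ω : V → V → ℝ) : Prop := ∀ s t, ω s t = ω t s

def NonnegW (ω : V → V → ℝ) : Prop := ∀ s t, 0 ≤ ω s t

def ConnW (ω : V → V → ℝ) : Prop := (SimpleGraph.fromRel fun s t => 0 < ω s t).Connected

def lpNormW [Fintype V] (ω : V → V → ℝ) (p : ℝ) {X : Type*} [NormedAddCommGroup X]
    (f : V → X) : ℝ := (∑ s, nu ω s * ‖f s‖ ^ p) ^ (1 / p)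

def gradNormW [Fintype V] (ω : V → V → ℝ) (p : ℝ) {X : Type*} [NormedAddCommGroup X]
    (f : V → X) : ℝ := (∑ s, ∑ t, edgeP ω s t * ‖f t - f s‖ ^ p) ^ (1 / p)

def poincareConst [Fintype V] (ω : V → V → ℝ) (p : ℝ) (X : Type*) [NormedAddCommGroup X] : ℝ :=
  sInf {π : ℝ | 0 ≤ π ∧
    ∀ f : V → X, (⨅ x : X, lpNormW ω p fun s => f s - x) ≤ π * gradNormW ω p f}

def markovW [Fintype V] (ω : V → V → ℝ) {X : Type*} [AddCommGroup X] [Module ℝ X]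
    (f : V → X) (s : V) : X := (wdeg ω s)⁻¹ • ∑ t, ω s t • f t

open scoped ENNReal

theorem exists_measurable_forall_le {Ω E : Type*} [MeasurableSpace Ω] [TopologicalSpace E]
    [TopologicalSpace.SeparableSpace E] [MeasurableSpace E] {S : Ω → E → ℝ}
    (hSm : ∀ c, Measurable fun a => S a c) (hSc : ∀ a, Continuous (S a)) {h : Ω → ℝ}
    (hh : Measurable h) (c₀ : E) (hex : ∀ a, S a c₀ ≤ h a ∨ ∃ c, S a c < h a) :
    ∃ x : Ω → E, Measurable x ∧ ∀ a, S a (x a) ≤ h a := by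
  classical
  have : Nonempty E := ⟨c₀⟩
  let D : ℕ → E := fun n => Nat.casesOn n c₀ (TopologicalSpace.denseSeq E)
  have hD : DenseRange D := (TopologicalSpace.denseRange_denseSeq E).mono <| by
    rintro _ ⟨n, rfl⟩
    exact ⟨n + 1, rfl⟩
  have hN : ∀ a, ∃ n, S a (D n) ≤ h a := fun a => by
    rcases hex a with h₀ | ⟨c, hc⟩
    · exact ⟨0, h₀⟩
    · obtain ⟨n, hn⟩ := hD.exists_mem_open (isOpen_lt (hSc a) continuous_const) ⟨c, hc⟩
      exact ⟨n, le_of_lt hn⟩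
  exact ⟨fun a => D (Nat.find (hN a)),
    measurable_from_nat.comp (measurable_find hN fun n => measurableSet_le (hSm _) hh),
    fun a => Nat.find_spec (hN a)⟩

section WeightedNorms

variable [Fintype V] {ω : V → V → ℝ} {p : ℝ}

def PoincareIneqW (ω : V → V → ℝ) (p : ℝ) (X : Type*) [NormedAddCommGroup X] (π : ℝ) : Prop :=
  ∀ f : V → X, (⨅ x : X, lpNormW ω p fun s => f s - x) ≤ π * gradNormW ω p f

theorem poincareConst_congr {X Y : Type*} [NormedAddCommGroup X] [NormedAddCommGroup Y]
    (h : ∀ π, 0 ≤ π → (PoincareIneqW ω p X π ↔ PoincareIneqW ω p Y π)) :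
    poincareConst ω p X = poincareConst ω p Y := by
  unfold poincareConst
  congr 1
  ext π
  exact and_congr_right (h π)

theorem nu_nonneg (hnn : NonnegW ω) (s : V) : 0 ≤ nu ω s :=
  div_nonneg (sum_nonneg fun t _ => hnn s t) (sum_nonneg fun t _ => sum_nonneg fun u _ => hnn t u)

theorem nu_pos (hdeg : ∀ s, 0 < wdeg ω s) (s : V) : 0 < nu ω s :=
  div_pos (hdeg s) (sum_pos (fun t _ => hdeg t) ⟨s, mem_univ s⟩)

theorem edgeP_nonneg (hnn : NonnegW ω) (s t : V) : 0 ≤ edgeP ω s t :=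
  div_nonneg (hnn s t) (sum_nonneg fun u _ => sum_nonneg fun v _ => hnn u v)

section Normed

variable {X : Type*} [NormedAddCommGroup X]

theorem lpNormW_nonneg (hnn : NonnegW ω) (f : V → X) : 0 ≤ lpNormW ω p f :=
  Real.rpow_nonneg (sum_nonneg fun s _ => mul_nonneg (nu_nonneg hnn s) (by positivity)) _

theorem gradNormW_nonneg (hnn : NonnegW ω) (f : V → X) : 0 ≤ gradNormW ω p f :=
  Real.rpow_nonneg (sum_nonneg fun s _ => sum_nonneg fun t _ =>
    mul_nonneg (edgeP_nonneg hnn s t) (by positivity)) _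

theorem lpNormW_rpow (hp : 0 < p) (hnn : NonnegW ω) (f : V → X) :
    lpNormW ω p f ^ p = ∑ s, nu ω s * ‖f s‖ ^ p := by
  rw [lpNormW, one_div]
  exact Real.rpow_inv_rpow (sum_nonneg fun s _ => mul_nonneg (nu_nonneg hnn s) (by positivity))
    hp.ne'

theorem gradNormW_rpow (hp : 0 < p) (hnn : NonnegW ω) (f : V → X) :
    gradNormW ω p f ^ p = ∑ s, ∑ t, edgeP ω s t * ‖f t - f s‖ ^ p := by
  rw [gradNormW, one_div]
  exact Real.rpow_inv_rpow (sum_nonneg fun s _ => sum_nonneg fun t _ =>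
    mul_nonneg (edgeP_nonneg hnn s t) (by positivity)) hp.ne'

theorem nu_mul_norm_rpow_le_lpNormW_rpow (hp : 0 < p) (hnn : NonnegW ω) (f : V → X) (s : V) :
    nu ω s * ‖f s‖ ^ p ≤ lpNormW ω p f ^ p := by
  rw [lpNormW_rpow hp hnn]
  exact single_le_sum (f := fun s => nu ω s * ‖f s‖ ^ p)
    (fun t _ => mul_nonneg (nu_nonneg hnn t) (by positivity)) (mem_univ s)

theorem lpNormW_smul {𝕜 : Type*} [NormedField 𝕜] [NormedSpace 𝕜 X] (hp : 0 < p)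
    (hnn : NonnegW ω) (c : 𝕜) (f : V → X) :
    (lpNormW ω p fun s => c • f s) = ‖c‖ * lpNormW ω p f := by
  have hsum : ∑ s, nu ω s * ‖c • f s‖ ^ p = ‖c‖ ^ p * ∑ s, nu ω s * ‖f s‖ ^ p := by
    rw [mul_sum]
    refine sum_congr rfl fun s _ => ?_
    rw [norm_smul, Real.mul_rpow (norm_nonneg c) (norm_nonneg _)]
    ring
  rw [lpNormW, lpNormW, hsum, Real.mul_rpow (by positivity)
    (sum_nonneg fun s _ => mul_nonneg (nu_nonneg hnn s) (by positivity)), one_div,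
    Real.rpow_rpow_inv (norm_nonneg c) hp.ne']

theorem iInf_lpNormW_le (hnn : NonnegW ω) (f : V → X) (x : X) :
    (⨅ y : X, lpNormW ω p fun s => f s - y) ≤ lpNormW ω p fun s => f s - x :=
  ciInf_le ⟨0, by rintro _ ⟨y, rfl⟩; exact lpNormW_nonneg hnn _⟩ x

theorem iInf_lpNormW_nonneg (hnn : NonnegW ω) (f : V → X) :
    0 ≤ ⨅ y : X, lpNormW ω p fun s => f s - y :=
  Real.iInf_nonneg fun _ => lpNormW_nonneg hnn _

theorem exists_lpNormW_sub_rpow_lt (hp : 0 < p) (hnn : NonnegW ω) (f : V → X) {t : ℝ}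
    (ht : (⨅ y : X, lpNormW ω p fun s => f s - y) ^ p < t) :
    ∃ x : X, (lpNormW ω p fun s => f s - x) ^ p < t := by
  by_contra! hge
  have ht0 : 0 ≤ t := (Real.rpow_nonneg (iInf_lpNormW_nonneg hnn f) p).trans ht.le
  have hle : t ^ p⁻¹ ≤ ⨅ y : X, lpNormW ω p fun s => f s - y :=
    le_ciInf fun x => by
      simpa [Real.rpow_rpow_inv (lpNormW_nonneg hnn _) hp.ne'] using
        Real.rpow_le_rpow ht0 (hge x) (inv_nonneg.2 hp.le)
  have := Real.rpow_le_rpow (Real.rpow_nonneg ht0 _) hle hp.le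
  rw [Real.rpow_inv_rpow ht0 hp.ne'] at this
  exact this.not_gt ht

end Normed

theorem iInf_lpNormW_mul_norm_le (hp : 0 < p) (hnn : NonnegW ω) (f : V → ℂ) (z w : ℂ) :
    (⨅ c : ℂ, lpNormW ω p fun s => f s - c) * ‖z‖ ≤ lpNormW ω p fun s => f s * z - w := by
  rcases eq_or_ne z 0 with rfl | hz
  · simpa using lpNormW_nonneg hnn _
  have hfactor : (fun s => f s * z - w) = fun s => z • (f s - w / z) := by
    funext s
    rw [smul_eq_mul]
    field_simp
  rw [hfactor, lpNormW_smul hp hnn, mul_comm]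
  exact mul_le_mul_of_nonneg_left (iInf_lpNormW_le hnn f _) (norm_nonneg z)

/-- The slack `ε * lpNormW ω p u ^ p` vanishes when `u = 0`, and then `c = 0` attains the bound. -/
theorem PoincareIneqW.sub_zero_le_or_exists_lt {π : ℝ} (h : PoincareIneqW ω p ℂ π) (hp : 0 < p)
    (hnn : NonnegW ω) (hπ : 0 ≤ π) (u : V → ℂ) {ε : ℝ} (hε : 0 < ε) :
    (lpNormW ω p fun s => u s - 0) ^ p ≤ π ^ p * gradNormW ω p u ^ p + ε * lpNormW ω p u ^ p ∨
      ∃ c, (lpNormW ω p fun s => u s - c) ^ p <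
        π ^ p * gradNormW ω p u ^ p + ε * lpNormW ω p u ^ p := by
  rcases (lpNormW_nonneg hnn u (p := p)).eq_or_lt with hzero | hpos
  · left
    simp only [sub_zero, ← hzero, Real.zero_rpow hp.ne', mul_zero, add_zero]
    exact mul_nonneg (Real.rpow_nonneg hπ _) (Real.rpow_nonneg (gradNormW_nonneg hnn _) _)
  · right
    refine exists_lpNormW_sub_rpow_lt hp hnn u ?_
    calc (⨅ c : ℂ, lpNormW ω p fun s => u s - c) ^ p ≤ (π * gradNormW ω p u) ^ p :=
          Real.rpow_le_rpow (iInf_lpNormW_nonneg hnn _) (h u) hp.le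
      _ = π ^ p * gradNormW ω p u ^ p := Real.mul_rpow hπ (gradNormW_nonneg hnn _)
      _ < _ := lt_add_of_pos_right _ (mul_pos hε (Real.rpow_pos_of_pos hpos _))

theorem measurable_lpNormW {Ω : Type*} [MeasurableSpace Ω] {u : Ω → V → ℂ}
    (hu : ∀ s, Measurable fun a => u a s) : Measurable fun a => lpNormW ω p (u a) := by
  unfold lpNormW
  fun_prop

theorem measurable_gradNormW {Ω : Type*} [MeasurableSpace Ω] {u : Ω → V → ℂ}
    (hu : ∀ s, Measurable fun a => u a s) : Measurable fun a => gradNormW ω p (u a) := by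
  unfold gradNormW
  fun_prop

theorem continuous_lpNormW_sub (hp : 0 < p) (f : V → ℂ) :
    Continuous fun c : ℂ => lpNormW ω p fun s => f s - c := by
  unfold lpNormW
  refine Continuous.rpow_const ?_ fun _ => Or.inr (by positivity)
  refine continuous_finsetSum _ fun s _ => continuous_const.mul ?_
  exact (continuous_const.sub continuous_id).norm.rpow_const fun _ => Or.inr hp.le

end WeightedNorms

section LpFubini

variable {Ω : Type*} [MeasurableSpace Ω] {μ : Measure Ω}

theorem MeasureTheory.Lp.coeFn_sub_ae_eq {E : Type*} [NormedAddCommGroup E] {q : ℝ≥0∞}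
    {F₁ F₂ : Lp E q μ} {G₁ G₂ : Ω → E} (h₁ : (F₁ : Ω → E) =ᵐ[μ] G₁) (h₂ : (F₂ : Ω → E) =ᵐ[μ] G₂) :
    ((F₁ - F₂ : Lp E q μ) : Ω → E) =ᵐ[μ] G₁ - G₂ :=
  (Lp.coeFn_sub F₁ F₂).trans (h₁.sub h₂)

variable {p : ℝ}

theorem MeasureTheory.Lp.integrable_norm_rpow_of_ae_eq (hp : 0 < p)
    (F : Lp ℂ (ENNReal.ofReal p) μ) {G : Ω → ℂ} (hG : (F : Ω → ℂ) =ᵐ[μ] G) :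
    Integrable (fun a => ‖G a‖ ^ p) μ := by
  simpa [ENNReal.toReal_ofReal hp.le] using
    ((Lp.memLp F).ae_eq hG).integrable_norm_rpow (by simpa using hp) ENNReal.ofReal_ne_top

theorem MeasureTheory.Lp.norm_rpow_eq_integral_of_ae_eq (hp : 0 < p)
    (F : Lp ℂ (ENNReal.ofReal p) μ) {G : Ω → ℂ} (hG : (F : Ω → ℂ) =ᵐ[μ] G) :
    ‖F‖ ^ p = ∫ a, ‖G a‖ ^ p ∂μ := by
  have hint : 0 ≤ ∫ a, ‖G a‖ ^ p ∂μ := integral_nonneg fun a => by positivity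
  rw [Lp.norm_def, eLpNorm_congr_ae hG,
    ((Lp.memLp F).ae_eq hG).eLpNorm_eq_integral_rpow_norm (by simpa using hp)
      ENNReal.ofReal_ne_top, ENNReal.toReal_ofReal hp.le,
    ENNReal.toReal_ofReal (by positivity), Real.rpow_inv_rpow hint hp.ne']

variable [Fintype V] {ω : V → V → ℝ}

theorem integrable_lpNormW_rpow (hp : 0 < p) (hnn : NonnegW ω)
    (F : V → Lp ℂ (ENNReal.ofReal p) μ) {G : V → Ω → ℂ} (hG : ∀ s, (F s : Ω → ℂ) =ᵐ[μ] G s) :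
    Integrable (fun a => (lpNormW ω p fun s => G s a) ^ p) μ := by
  simp_rw [lpNormW_rpow hp hnn]
  exact integrable_finsetSum _ fun s _ =>
    (Lp.integrable_norm_rpow_of_ae_eq hp (F s) (hG s)).const_mul _

theorem lpNormW_rpow_eq_integral [Fact (1 ≤ ENNReal.ofReal p)] (hp : 0 < p) (hnn : NonnegW ω)
    (F : V → Lp ℂ (ENNReal.ofReal p) μ) {G : V → Ω → ℂ} (hG : ∀ s, (F s : Ω → ℂ) =ᵐ[μ] G s) :
    lpNormW ω p F ^ p = ∫ a, (lpNormW ω p fun s => G s a) ^ p ∂μ := by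
  simp_rw [lpNormW_rpow hp hnn]
  rw [integral_finsetSum _ fun s _ =>
    (Lp.integrable_norm_rpow_of_ae_eq hp (F s) (hG s)).const_mul _]
  refine sum_congr rfl fun s _ => ?_
  rw [integral_const_mul, Lp.norm_rpow_eq_integral_of_ae_eq hp (F s) (hG s)]

theorem integrable_gradNormW_rpow (hp : 0 < p) (hnn : NonnegW ω)
    (F : V → Lp ℂ (ENNReal.ofReal p) μ) {G : V → Ω → ℂ} (hG : ∀ s, (F s : Ω → ℂ) =ᵐ[μ] G s) :
    Integrable (fun a => (gradNormW ω p fun s => G s a) ^ p) μ := by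
  simp_rw [gradNormW_rpow hp hnn]
  exact integrable_finsetSum _ fun s _ => integrable_finsetSum _ fun t _ =>
    (Lp.integrable_norm_rpow_of_ae_eq hp (F t - F s) (Lp.coeFn_sub_ae_eq (hG t) (hG s))).const_mul _

theorem gradNormW_rpow_eq_integral [Fact (1 ≤ ENNReal.ofReal p)] (hp : 0 < p) (hnn : NonnegW ω)
    (F : V → Lp ℂ (ENNReal.ofReal p) μ) {G : V → Ω → ℂ} (hG : ∀ s, (F s : Ω → ℂ) =ᵐ[μ] G s) :
    gradNormW ω p F ^ p = ∫ a, (gradNormW ω p fun s => G s a) ^ p ∂μ := by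
  have hint : ∀ s t, Integrable (fun a => ‖G t a - G s a‖ ^ p) μ := fun s t =>
    Lp.integrable_norm_rpow_of_ae_eq hp (F t - F s) (Lp.coeFn_sub_ae_eq (hG t) (hG s))
  simp_rw [gradNormW_rpow hp hnn]
  rw [integral_finsetSum _ fun s _ => integrable_finsetSum _ fun t _ => (hint s t).const_mul _]
  refine sum_congr rfl fun s _ => ?_
  rw [integral_finsetSum _ fun t _ => (hint s t).const_mul _]
  refine sum_congr rfl fun t _ => ?_
  rw [integral_const_mul,
    Lp.norm_rpow_eq_integral_of_ae_eq hp (F t - F s) (Lp.coeFn_sub_ae_eq (hG t) (hG s))]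
  rfl

theorem memLp_of_integrable_lpNormW_sub_rpow (hp : 0 < p) (hnn : NonnegW ω)
    (f : V → Lp ℂ (ENNReal.ofReal p) μ) {x : Ω → ℂ} (hx : AEStronglyMeasurable x μ) {s₀ : V}
    (hs₀ : 0 < nu ω s₀) (hint : Integrable (fun a => (lpNormW ω p fun s => f s a - x a) ^ p) μ) :
    MemLp x (ENNReal.ofReal p) μ := by
  have hmeas : AEStronglyMeasurable (fun a => f s₀ a - x a) μ :=
    (Lp.aestronglyMeasurable (f s₀)).sub hx
  have hdiff : MemLp (fun a => f s₀ a - x a) (ENNReal.ofReal p) μ := by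
    refine (integrable_norm_rpow_iff hmeas (by simpa using hp) ENNReal.ofReal_ne_top).1 ?_
    rw [ENNReal.toReal_ofReal hp.le]
    refine (hint.div_const (nu ω s₀)).mono'
      (hmeas.norm.aemeasurable.pow_const p).aestronglyMeasurable (ae_of_all _ fun a => ?_)
    rw [Real.norm_of_nonneg (by positivity), le_div_iff₀ hs₀, mul_comm]
    exact nu_mul_norm_rpow_le_lpNormW_rpow hp hnn (fun s => f s a - x a) s₀
  exact ((Lp.memLp (f s₀)).sub hdiff).ae_eq (ae_of_all _ fun a => sub_sub_cancel _ _)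

end LpFubini

section Embedding

variable {Ω : Type*} [MeasurableSpace Ω] {μ : Measure Ω} {p : ℝ} [Fact (1 ≤ ENNReal.ofReal p)]
variable [Fintype V] {ω : V → V → ℝ}

theorem iInf_lpNormW_le_lpNormW_smul_sub (hp : 0 < p) (hnn : NonnegW ω) (f : V → ℂ)
    {g : Lp ℂ (ENNReal.ofReal p) μ} (hg : ‖g‖ = 1) (x : Lp ℂ (ENNReal.ofReal p) μ) :
    (⨅ c : ℂ, lpNormW ω p fun s => f s - c) ≤ lpNormW ω p fun s => f s • g - x := by
  set m := ⨅ c : ℂ, lpNormW ω p fun s => f s - c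
  have hm : 0 ≤ m := iInf_lpNormW_nonneg hnn f
  have hG : ∀ s, ((f s • g - x : Lp ℂ (ENNReal.ofReal p) μ) : Ω → ℂ) =ᵐ[μ]
      fun a => f s * g a - x a := fun s =>
    Lp.coeFn_sub_ae_eq (Lp.coeFn_smul (f s) g) (ae_eq_refl _)
  have hsplit : ∀ a, (m * ‖g a‖) ^ p = m ^ p * ‖g a‖ ^ p := fun a =>
    Real.mul_rpow hm (norm_nonneg _)
  rw [← Real.rpow_le_rpow_iff hm (lpNormW_nonneg hnn _) hp,
    lpNormW_rpow_eq_integral hp hnn _ hG]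
  calc m ^ p = ∫ a, (m * ‖g a‖) ^ p ∂μ := by
        rw [funext hsplit, integral_const_mul,
          ← Lp.norm_rpow_eq_integral_of_ae_eq hp g (ae_eq_refl _), hg, Real.one_rpow, mul_one]
    _ ≤ ∫ a, (lpNormW ω p fun s => f s * g a - x a) ^ p ∂μ := by
        refine integral_mono ?_ (integrable_lpNormW_rpow hp hnn _ hG) fun a =>
          Real.rpow_le_rpow (mul_nonneg hm (norm_nonneg _))
            (iInf_lpNormW_mul_norm_le hp hnn f (g a) (x a)) hp.le
        rw [funext hsplit]
        exact (Lp.integrable_norm_rpow_of_ae_eq hp g (ae_eq_refl _)).const_mul _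

theorem PoincareIneqW.complex_of_Lp [Nontrivial (Lp ℂ (ENNReal.ofReal p) μ)] (hp : 0 < p)
    (hnn : NonnegW ω) {π : ℝ} (h : PoincareIneqW ω p (Lp ℂ (ENNReal.ofReal p) μ) π) :
    PoincareIneqW ω p ℂ π := by
  intro f
  obtain ⟨g, hg⟩ := exists_norm_eq (Lp ℂ (ENNReal.ofReal p) μ) zero_le_one
  have hgrad : (gradNormW ω p fun s => f s • g) = gradNormW ω p f := by
    simp only [gradNormW, ← sub_smul, norm_smul, hg, mul_one]
  calc (⨅ c : ℂ, lpNormW ω p fun s => f s - c)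
      ≤ ⨅ x : Lp ℂ (ENNReal.ofReal p) μ, lpNormW ω p fun s => f s • g - x :=
        le_ciInf (iInf_lpNormW_le_lpNormW_smul_sub hp hnn f hg)
    _ ≤ π * gradNormW ω p f := hgrad ▸ h fun s => f s • g

end Embedding

section Averaging

variable {Ω : Type*} [MeasurableSpace Ω] {μ : Measure Ω} {p : ℝ} [Fact (1 ≤ ENNReal.ofReal p)]
variable [Fintype V] {ω : V → V → ℝ}

theorem PoincareIneqW.exists_Lp_lpNormW_sub_rpow_le [Nonempty V] (hp : 0 < p) (hnn : NonnegW ω)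
    (hdeg : ∀ s, 0 < wdeg ω s) {π : ℝ} (h : PoincareIneqW ω p ℂ π) (hπ : 0 ≤ π)
    (f : V → Lp ℂ (ENNReal.ofReal p) μ) {ε : ℝ} (hε : 0 < ε) :
    ∃ X : Lp ℂ (ENNReal.ofReal p) μ, (lpNormW ω p fun s => f s - X) ^ p ≤
      π ^ p * gradNormW ω p f ^ p + ε * lpNormW ω p f ^ p := by
  obtain ⟨s₀⟩ := ‹Nonempty V›
  set u : Ω → V → ℂ := fun a s => f s a
  have hu : ∀ s, Measurable fun a => u a s := fun s => (Lp.stronglyMeasurable (f s)).measurable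
  have hf : ∀ s, (f s : Ω → ℂ) =ᵐ[μ] fun a => u a s := fun s => ae_eq_refl _
  set S : Ω → ℂ → ℝ := fun a c => (lpNormW ω p fun s => u a s - c) ^ p
  set bound : Ω → ℝ := fun a => π ^ p * gradNormW ω p (u a) ^ p + ε * lpNormW ω p (u a) ^ p
  have hbound_int : Integrable bound μ :=
    ((integrable_gradNormW_rpow hp hnn f hf).const_mul _).add
      ((integrable_lpNormW_rpow hp hnn f hf).const_mul _)
  have hex : ∀ a, S a 0 ≤ bound a ∨ ∃ c, S a c < bound a := fun a =>
    h.sub_zero_le_or_exists_lt hp hnn hπ (u a) hε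
  obtain ⟨x, hxm, hx⟩ := exists_measurable_forall_le
    (fun c => (measurable_lpNormW fun s => (hu s).sub_const c).pow_const p)
    (fun a => (continuous_lpNormW_sub hp (u a)).rpow_const fun _ => Or.inr hp.le)
    ((((measurable_gradNormW hu).pow_const p).const_mul _).add
      (((measurable_lpNormW hu).pow_const p).const_mul _)) 0 hex
  have hux : ∀ s, Measurable fun a => u a s - x a := fun s => (hu s).sub hxm
  have hSx_int : Integrable (fun a => S a (x a)) μ :=
    hbound_int.mono' ((measurable_lpNormW hux).pow_const p).aestronglyMeasurable <|
      ae_of_all _ fun a => by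
        rw [Real.norm_of_nonneg (Real.rpow_nonneg (lpNormW_nonneg hnn _) _)]
        exact hx a
  have hxLp : MemLp x (ENNReal.ofReal p) μ :=
    memLp_of_integrable_lpNormW_sub_rpow hp hnn f hxm.aestronglyMeasurable (nu_pos hdeg s₀)
      hSx_int
  have hX : ∀ s, ((f s - hxLp.toLp x : Lp ℂ (ENNReal.ofReal p) μ) : Ω → ℂ) =ᵐ[μ]
      fun a => u a s - x a := fun s => Lp.coeFn_sub_ae_eq (hf s) hxLp.coeFn_toLp
  refine ⟨hxLp.toLp x, ?_⟩
  calc (lpNormW ω p fun s => f s - hxLp.toLp x) ^ p = ∫ a, S a (x a) ∂μ :=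
        lpNormW_rpow_eq_integral hp hnn _ hX
    _ ≤ ∫ a, bound a ∂μ := integral_mono hSx_int hbound_int hx
    _ = π ^ p * gradNormW ω p f ^ p + ε * lpNormW ω p f ^ p := by
        rw [integral_add ((integrable_gradNormW_rpow hp hnn f hf).const_mul _)
            ((integrable_lpNormW_rpow hp hnn f hf).const_mul _), integral_const_mul,
          integral_const_mul, gradNormW_rpow_eq_integral hp hnn f hf,
          lpNormW_rpow_eq_integral hp hnn f hf]

theorem PoincareIneqW.Lp_of_complex [Nonempty V] (hp : 0 < p) (hnn : NonnegW ω)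
    (hdeg : ∀ s, 0 < wdeg ω s) {π : ℝ} (h : PoincareIneqW ω p ℂ π) (hπ : 0 ≤ π) :
    PoincareIneqW ω p (Lp ℂ (ENNReal.ofReal p) μ) π := by
  intro f
  set K := lpNormW ω p f ^ p
  have hK : 0 ≤ K := Real.rpow_nonneg (lpNormW_nonneg hnn f) p
  rw [← Real.rpow_le_rpow_iff (iInf_lpNormW_nonneg hnn f)
    (mul_nonneg hπ (gradNormW_nonneg hnn f)) hp, Real.mul_rpow hπ (gradNormW_nonneg hnn f)]
  refine le_of_forall_pos_le_add fun ε hε => ?_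
  obtain ⟨X, hX⟩ := h.exists_Lp_lpNormW_sub_rpow_le hp hnn hdeg hπ f
    (div_pos hε (by linarith : 0 < K + 1))
  calc (⨅ x : Lp ℂ (ENNReal.ofReal p) μ, lpNormW ω p fun s => f s - x) ^ p
      ≤ (lpNormW ω p fun s => f s - X) ^ p :=
        Real.rpow_le_rpow (iInf_lpNormW_nonneg hnn f) (iInf_lpNormW_le hnn f X) hp.le
    _ ≤ π ^ p * gradNormW ω p f ^ p + ε / (K + 1) * K := hX
    _ ≤ π ^ p * gradNormW ω p f ^ p + ε := by
        gcongr
        rw [div_mul_eq_mul_div, div_le_iff₀ (by linarith)]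
        nlinarith

end Averaging

theorem stmt1_general (p : ℝ) (hp : 1 < p)
    {Ω : Type*} [MeasurableSpace Ω] (μ : Measure Ω) [Fact (1 ≤ ENNReal.ofReal p)]
    [Nontrivial (Lp ℂ (ENNReal.ofReal p) μ)]
    {V : Type*} [Fintype V]
    (ω : V → V → ℝ) (hnn : NonnegW ω) (hconn : ConnW ω)
    (hdeg : ∀ s, 0 < wdeg ω s) :
    poincareConst ω p (Lp ℂ (ENNReal.ofReal p) μ) = poincareConst ω p ℂ := by
  have : Nonempty V := hconn.nonempty
  have hp₀ : 0 < p := zero_lt_one.trans hp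
  exact poincareConst_congr fun π hπ =>
    ⟨PoincareIneqW.complex_of_Lp hp₀ hnn, fun h => h.Lp_of_complex hp₀ hnn hdeg hπ⟩

/-- For `1 < p < ∞`, a measure space `(Ω, μ)` with `L^p(Ω, μ; ℂ) ≠ {0}`, and a
connected finite weighted graph with positive degrees,
`π_{p,𝒢}(L^p(Ω, μ; ℂ)) = π_{p,𝒢}(ℂ)`. -/
theorem stmt1 (p : ℝ) (hp : 1 < p)
    {Ω : Type*} [MeasurableSpace Ω] (μ : Measure Ω) [Fact (1 ≤ ENNReal.ofReal p)]
    [Nontrivial (Lp ℂ (ENNReal.ofReal p) μ)]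
    {V : Type*} [Fintype V]
    (ω : V → V → ℝ) (hsym : SymmW ω) (hnn : NonnegW ω) (hconn : ConnW ω)
    (hdeg : ∀ s, 0 < wdeg ω s) :
    poincareConst ω p (Lp ℂ (ENNReal.ofReal p) μ) = poincareConst ω p ℂ :=
  stmt1_general p hp μ ω hnn hconn hdeg
end
end

section
/- Let p ∈ [2, ∞), let (Ω, μ) be a finite probability space, let (Ω', μ') be a measure space, and let U : Ω → L^p(Ω', μ'; ℂ). Then ‖𝔼U‖_{L^p}^p + 2^{2−p} · 𝔼[‖U − 𝔼U‖_{L^p}^p] ≤ 𝔼[‖U‖_{L^p}^p], where 𝔼 denotes expectation with respect to μ and ‖·‖_{L^p} is the norm of L^p(Ω', μ'; ℂ). -/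
/-!
For `p ≥ 2` and vectors `a, b` of a real inner product space,
`‖a‖^p + p‖a‖^(p-2)⟪a, b⟫ + 2^(2-p)‖b‖^p ≤ ‖a + b‖^p`.
Writing `‖a + b‖^p = (‖a‖² + 2⟪a, b⟫ + ‖b‖²)^(p/2)`, this follows from the tangent line of
`X ↦ X^(p/2)` at `‖a‖²` when `‖b‖ ≤ 2‖a‖`, and at `(‖b‖ - ‖a‖)²` otherwise.
Taking `a = 𝔼U` and `b = U - 𝔼U` and averaging kills the linear term, which gives the inequality
pointwise on `Ω'`; integrating over `Ω'` gives it in `L^p`.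
-/

open MeasureTheory
open scoped RealInnerProductSpace

namespace Real

theorem rpow_add_le_mul_rpow_add_rpow {q x y : ℝ} (hq : 1 ≤ q) (hx : 0 ≤ x) (hy : 0 ≤ y) :
    (x + y) ^ q ≤ 2 ^ (q - 1) * (x ^ q + y ^ q) := by
  lift x to NNReal using hx
  lift y to NNReal using hy
  exact_mod_cast NNReal.rpow_add_le_mul_rpow_add_rpow x y hq

theorem rpow_tangent_le {q x y : ℝ} (hq : 1 ≤ q) (hx : 0 ≤ x) (hy : 0 ≤ y) :
    y ^ q + q * y ^ (q - 1) * (x - y) ≤ x ^ q := by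
  have hq0 : 0 < q := by linarith
  -- weighted AM-GM for `x ^ q` and `y ^ q` with weights `1/q` and `1 - 1/q`
  have young := geom_mean_le_arith_mean2_weighted (inv_nonneg.2 hq0.le)
    (sub_nonneg.2 (inv_le_one_of_one_le₀ hq)) (rpow_nonneg hx q) (rpow_nonneg hy q)
    (add_sub_cancel _ _)
  rw [← rpow_mul hx, ← rpow_mul hy, mul_inv_cancel₀ hq0.ne', rpow_one,
    mul_sub, mul_one, mul_inv_cancel₀ hq0.ne'] at young
  have hy' : y ^ q = y ^ (q - 1) * y := by
    rw [← rpow_add_one' hy (by linarith), sub_add_cancel]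
  have hqq : q * q⁻¹ = 1 := mul_inv_cancel₀ hq0.ne'
  linear_combination q * young + (x ^ q - y ^ q) * hqq + q * hy'

theorem sq_rpow_div_two {u : ℝ} (hu : 0 ≤ u) (p : ℝ) : (u ^ 2) ^ (p / 2) = u ^ p := by
  rw [← rpow_natCast_mul hu]
  ring_nf

theorem rpow_div_two_tangent_le {p u X : ℝ} (hp : 2 ≤ p) (hu : 0 ≤ u) (hX : 0 ≤ X) :
    u ^ p + p / 2 * u ^ (p - 2) * (X - u ^ 2) ≤ X ^ (p / 2) := by
  have h := rpow_tangent_le (by linarith : 1 ≤ p / 2) hX (sq_nonneg u)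
  rwa [sq_rpow_div_two hu, show p / 2 - 1 = (p - 2) / 2 by ring, sq_rpow_div_two hu] at h

theorem two_rpow_two_sub_mul_rpow_le {p A r : ℝ} (hp : 2 ≤ p) (hr : 0 ≤ r) (hrA : r ≤ 2 * A) :
    2 ^ (2 - p) * r ^ p ≤ A ^ (p - 2) * r ^ 2 := by
  have hA : 0 ≤ A := by linarith
  calc 2 ^ (2 - p) * r ^ p = 2 ^ (2 - p) * r ^ (p - 2) * r ^ 2 := by
        rw [mul_assoc, ← rpow_two, ← rpow_add' hr (by linarith : (0 : ℝ) < p - 2 + 2).ne',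
          sub_add_cancel]
    _ ≤ 2 ^ (2 - p) * (2 * A) ^ (p - 2) * r ^ 2 := by gcongr
    _ = A ^ (p - 2) * r ^ 2 := by
        rw [mul_rpow zero_le_two hA, ← mul_assoc, ← rpow_add zero_lt_two]
        norm_num

theorem rpow_add_two_rpow_mul_add_rpow_le {p A s : ℝ} (hp : 2 ≤ p) (hA : 0 ≤ A) (hAs : A ≤ s) :
    A ^ p + 2 ^ (2 - p) * (A + s) ^ p ≤ s ^ p + p * A ^ (p - 1) * (A + s) := by
  set g : ℝ → ℝ := fun x ↦ x ^ p + p * A ^ (p - 1) * (A + x) - 2 ^ (2 - p) * (A + x) ^ p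
  have hg : ∀ x, HasDerivAt g
      (p * x ^ (p - 1) + p * A ^ (p - 1) - 2 ^ (2 - p) * (p * (A + x) ^ (p - 1))) x := by
    intro x
    have hshift := (hasDerivAt_id x).const_add A
    have h := ((hasDerivAt_rpow_const (Or.inr (by linarith : 1 ≤ p))).add
      (hshift.const_mul (p * A ^ (p - 1)))).sub
      (((hasDerivAt_rpow_const (Or.inr (by linarith : 1 ≤ p))).comp x hshift).const_mul (2 ^ (2 - p)))
    rw [mul_one, mul_one] at h
    exact h
  -- `g' ≥ 0` is the power-mean inequality `(A + x)^(p-1) ≤ 2^(p-2) (A^(p-1) + x^(p-1))`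
  have hg' : ∀ x ∈ interior (Set.Ici A),
      0 ≤ p * x ^ (p - 1) + p * A ^ (p - 1) - 2 ^ (2 - p) * (p * (A + x) ^ (p - 1)) := by
    intro x hx
    rw [interior_Ici] at hx
    have hmean := rpow_add_le_mul_rpow_add_rpow (by linarith : 1 ≤ p - 1) hA (hA.trans hx.le)
    have h22 : (2 : ℝ) ^ (2 - p) * 2 ^ (p - 1 - 1) = 1 := by
      rw [← rpow_add zero_lt_two, show 2 - p + (p - 1 - 1) = 0 by ring, rpow_zero]
    have := mul_le_mul_of_nonneg_left hmean (by positivity : 0 ≤ p * 2 ^ (2 - p))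
    linear_combination this + p * (A ^ (p - 1) + x ^ (p - 1)) * h22
  have hmono : MonotoneOn g (Set.Ici A) :=
    monotoneOn_of_hasDerivWithinAt_nonneg (convex_Ici A)
      (fun x _ ↦ (hg x).continuousAt.continuousWithinAt) (fun x _ ↦ (hg x).hasDerivWithinAt) hg'
  have hgA : A ^ p ≤ g A := by
    have e1 : A ^ (p - 1) * (A + A) = 2 * A ^ p := by
      rw [← two_mul, mul_left_comm, ← rpow_add_one' hA (by linarith), sub_add_cancel]
    have e2 : (2 : ℝ) ^ (2 - p) * (A + A) ^ p = 4 * A ^ p := by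
      rw [← two_mul, mul_rpow zero_le_two hA, ← mul_assoc, ← rpow_add zero_lt_two]
      norm_num
    have : 0 ≤ (p - 2) * A ^ p := mul_nonneg (by linarith) (rpow_nonneg hA p)
    simp only [g, mul_assoc, e1, e2]
    linarith
  have := hgA.trans (hmono Set.self_mem_Ici hAs hAs)
  simp only [g] at this
  linarith

end Real

open Real in
theorem norm_rpow_add_mul_inner_add_le {E : Type*} [NormedAddCommGroup E]
    [InnerProductSpace ℝ E] {p : ℝ} (hp : 2 ≤ p) (a b : E) :
    ‖a‖ ^ p + p * ‖a‖ ^ (p - 2) * ⟪a, b⟫ + 2 ^ (2 - p) * ‖b‖ ^ p ≤ ‖a + b‖ ^ p := by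
  have hX := norm_add_sq_real a b
  set A := ‖a‖
  set r := ‖b‖
  set t := ⟪a, b⟫
  have hA : 0 ≤ A := norm_nonneg a
  have hr : 0 ≤ r := norm_nonneg b
  have ht : |t| ≤ A * r := abs_real_inner_le_norm a b
  rw [← sq_rpow_div_two (norm_nonneg (a + b)) p, hX]
  have hX0 : 0 ≤ A ^ 2 + 2 * t + r ^ 2 := hX ▸ sq_nonneg _
  rcases le_or_gt r (2 * A) with hrA | hrA
  · have h1 := rpow_div_two_tangent_le hp hA hX0
    have h2 := two_rpow_two_sub_mul_rpow_le hp hr hrA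
    have h3 : A ^ (p - 2) * r ^ 2 ≤ p / 2 * (A ^ (p - 2) * r ^ 2) :=
      le_mul_of_one_le_left (by positivity) (by linarith)
    linear_combination h1 + h2 + h3
  · have h1 := rpow_div_two_tangent_le hp (by linarith : 0 ≤ r - A) hX0
    have h2 := rpow_add_two_rpow_mul_add_rpow_le hp hA (by linarith : A ≤ r - A)
    rw [add_sub_cancel] at h2
    have h3 : A ^ (p - 2) ≤ (r - A) ^ (p - 2) := rpow_le_rpow hA (by linarith) (by linarith)
    have h4 : A ^ (p - 1) = A ^ (p - 2) * A := by
      rw [← rpow_add_one' hA (by linarith)]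
      ring_nf
    have h5 := mul_le_mul_of_nonneg_right h3 (by linarith [neg_abs_le t] : 0 ≤ t + A * r)
    linear_combination h2 + p * h5 + h1 + p * r * h4

theorem norm_sum_smul_rpow_add_sum_norm_sub_rpow_le {ι E : Type*} [Fintype ι]
    [NormedAddCommGroup E] [InnerProductSpace ℝ E] {p : ℝ} (hp : 2 ≤ p)
    (w : ι → ℝ) (hw : ∀ i, 0 ≤ w i) (hw1 : ∑ i, w i = 1) (z : ι → E) :
    ‖∑ i, w i • z i‖ ^ p + 2 ^ (2 - p) * ∑ i, w i * ‖z i - ∑ j, w j • z j‖ ^ p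
      ≤ ∑ i, w i * ‖z i‖ ^ p := by
  set m := ∑ j, w j • z j
  have hcentred : ∑ i, w i * ⟪m, z i - m⟫ = 0 := by
    simp_rw [← inner_smul_right, ← inner_sum, smul_sub, Finset.sum_sub_distrib,
      ← Finset.sum_smul, hw1, one_smul]
    rw [sub_self, inner_zero_right]
  calc ‖m‖ ^ p + 2 ^ (2 - p) * ∑ i, w i * ‖z i - m‖ ^ p
      = ‖m‖ ^ p * ∑ i, w i + p * ‖m‖ ^ (p - 2) * ∑ i, w i * ⟪m, z i - m⟫
          + 2 ^ (2 - p) * ∑ i, w i * ‖z i - m‖ ^ p := by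
        rw [hw1, hcentred]
        ring
    _ = ∑ i, w i * (‖m‖ ^ p + p * ‖m‖ ^ (p - 2) * ⟪m, z i - m⟫
          + 2 ^ (2 - p) * ‖z i - m‖ ^ p) := by
        simp only [Finset.mul_sum, ← Finset.sum_add_distrib]
        exact Finset.sum_congr rfl fun i _ ↦ by ring
    _ ≤ ∑ i, w i * ‖z i‖ ^ p := by
        gcongr with i
        · exact hw i
        simpa using norm_rpow_add_mul_inner_add_le hp m (z i - m)

namespace MeasureTheory.Lp

variable {α E : Type*} [MeasurableSpace α] {μ : Measure α} [NormedAddCommGroup E] {p : ℝ}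

theorem integrable_norm_rpow (hp : 0 < p) (f : Lp E (ENNReal.ofReal p) μ) :
    Integrable (fun a ↦ ‖f a‖ ^ p) μ := by
  simpa [ENNReal.toReal_ofReal hp.le] using
    (Lp.memLp f).integrable_norm_rpow (by simpa using hp) ENNReal.ofReal_ne_top

theorem integrable_sum_mul_norm_rpow {ι : Type*} [Fintype ι] (hp : 0 < p) (w : ι → ℝ)
    (f : ι → Lp E (ENNReal.ofReal p) μ) :
    Integrable (fun a ↦ ∑ i, w i * ‖f i a‖ ^ p) μ :=
  integrable_finsetSum _ fun i _ ↦ (integrable_norm_rpow hp (f i)).const_mul (w i)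

theorem norm_rpow_eq_integral_norm_rpow (hp : 0 < p) (f : Lp E (ENNReal.ofReal p) μ) :
    ‖f‖ ^ p = ∫ a, ‖f a‖ ^ p ∂μ := by
  have h := (Lp.memLp f).eLpNorm_eq_integral_rpow_norm (by simpa using hp) ENNReal.ofReal_ne_top
  rw [ENNReal.toReal_ofReal hp.le] at h
  have hnn : 0 ≤ ∫ a, ‖f a‖ ^ p ∂μ := integral_nonneg fun a ↦ by positivity
  rw [Lp.norm_def, h, ENNReal.toReal_ofReal (by positivity), Real.rpow_inv_rpow hnn hp.ne']

theorem sum_mul_norm_rpow_eq_integral {ι : Type*} [Fintype ι] (hp : 0 < p) (w : ι → ℝ)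
    (f : ι → Lp E (ENNReal.ofReal p) μ) :
    ∑ i, w i * ‖f i‖ ^ p = ∫ a, ∑ i, w i * ‖f i a‖ ^ p ∂μ := by
  rw [integral_finsetSum _ fun i _ ↦ (integrable_norm_rpow hp (f i)).const_mul (w i)]
  simp_rw [integral_const_mul, norm_rpow_eq_integral_norm_rpow hp]

theorem coeFn_sum_smul {ι 𝕜 : Type*} [Fintype ι] [NormedField 𝕜] [NormedSpace 𝕜 E]
    {q : ENNReal} (w : ι → 𝕜) (f : ι → Lp E q μ) :
    ⇑(∑ i, w i • f i) =ᵐ[μ] fun a ↦ ∑ i, w i • f i a := by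
  filter_upwards [coeFn_fun_finsetSum Finset.univ (fun i ↦ w i • f i),
    ae_all_iff.2 fun i ↦ coeFn_smul (w i) (f i)] with a hsum hsmul
  simp only [hsum, hsmul, Pi.smul_apply]

theorem norm_sum_smul_rpow_add_sum_norm_sub_rpow_le [InnerProductSpace ℝ E]
    [Fact (1 ≤ ENNReal.ofReal p)] {ι : Type*} [Fintype ι] (hp : 2 ≤ p)
    (w : ι → ℝ) (hw : ∀ i, 0 ≤ w i) (hw1 : ∑ i, w i = 1) (U : ι → Lp E (ENNReal.ofReal p) μ) :
    ‖∑ i, w i • U i‖ ^ p + 2 ^ (2 - p) * ∑ i, w i * ‖U i - ∑ j, w j • U j‖ ^ p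
      ≤ ∑ i, w i * ‖U i‖ ^ p := by
  have hp0 : 0 < p := by linarith
  set S := ∑ j, w j • U j
  have hS : ⇑S =ᵐ[μ] fun a ↦ ∑ i, w i • U i a := coeFn_sum_smul w U
  have hpointwise : ∀ᵐ a ∂μ, ‖S a‖ ^ p + 2 ^ (2 - p) * ∑ i, w i * ‖(U i - S) a‖ ^ p
      ≤ ∑ i, w i * ‖U i a‖ ^ p := by
    filter_upwards [hS, ae_all_iff.2 fun i ↦ coeFn_sub (U i) S] with a hSa hsub
    simp only [hsub, Pi.sub_apply, hSa]
    exact _root_.norm_sum_smul_rpow_add_sum_norm_sub_rpow_le hp w hw hw1 fun i ↦ U i a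
  have hint_lhs := (integrable_norm_rpow hp0 S).add
    ((integrable_sum_mul_norm_rpow hp0 w fun i ↦ U i - S).const_mul (2 ^ (2 - p)))
  rw [norm_rpow_eq_integral_norm_rpow hp0, sum_mul_norm_rpow_eq_integral hp0,
    sum_mul_norm_rpow_eq_integral hp0, ← integral_const_mul, ← integral_add
      (integrable_norm_rpow hp0 S) ((integrable_sum_mul_norm_rpow hp0 w _).const_mul _)]
  exact integral_mono_ae hint_lhs (integrable_sum_mul_norm_rpow hp0 w U) hpointwise

end MeasureTheory.Lp

/-- for `p ∈ [2,∞)`, a finite probability space `(Ω,μ)` (modelled as `Fin n` with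
weights), a measure space `(Ω',μ')` and `U : Ω → L^p(Ω',μ';ℂ)`,
`‖𝔼U‖^p + 2^{2−p}·𝔼[‖U − 𝔼U‖^p] ≤ 𝔼[‖U‖^p]`. -/
theorem stmt5 (p : ℝ) (hp : 2 ≤ p)
    {Ω' : Type*} [MeasurableSpace Ω'] (μ' : Measure Ω')
    [Fact (1 ≤ ENNReal.ofReal p)]
    (n : ℕ) (μ : Fin n → ℝ) (hμ : ∀ i, 0 ≤ μ i) (hsum : ∑ i, μ i = 1)
    (U : Fin n → Lp ℂ (ENNReal.ofReal p) μ') :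
    ‖∑ i, μ i • U i‖ ^ p + (2 : ℝ) ^ (2 - p) * ∑ i, μ i * ‖U i - ∑ j, μ j • U j‖ ^ p
      ≤ ∑ i, μ i * ‖U i‖ ^ p :=
  Lp.norm_sum_smul_rpow_add_sum_norm_sub_rpow_le hp μ hμ hsum U
end

section
/- For every 1 ≤ p, q < ∞ there exists a constant C_{p,q} > 0 such that for every measure space (Ω, μ), every complex Banach space X, and every two strongly measurable functions f₁, f₂ in the unit ball of the Bochner space L^p(Ω, μ; X), one has ‖M_{p,q}(f₁) − M_{p,q}(f₂)‖_{L^q(Ω,μ;X)} ≤ C_{p,q} · ‖f₁ − f₂‖_{L^p(Ω,μ;X)}^{min(p/q, 1)}. -/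
/-!
The pointwise bounds come from splitting, for `‖y‖ ≤ ‖x‖`,
`{x}^α - {y}^α = ‖x‖^{α-1} (x - y) + (‖x‖^{α-1} - ‖y‖^{α-1}) y`.
For `α = p / q ≤ 1` the map `x ↦ {x}^α` is `α`-Hölder on `X` with constant `3`, so integrating
the pointwise bound gives the `L^q`–`L^p` estimate with exponent `p / q` directly. For `α > 1` it
is only locally Lipschitz, `‖{x}^α - {y}^α‖ ≤ (1 + α)(‖x‖^{α-1} + ‖y‖^{α-1})‖x - y‖`, and
Hölder's inequality with `1 / q = (α - 1) / p + 1 / p` puts the weight in `L^{p/(α-1)}`, where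
the unit ball bound on `f₁, f₂` controls it.
-/

open scoped BigOperators ENNReal
open MeasureTheory

noncomputable section

/-- The map `x ↦ {x}^α = ‖x‖^{α−1} x` (with `{0}^α = 0`). -/
def mazurPow {X : Type*} [NormedAddCommGroup X] [Module ℝ X] (α : ℝ) (x : X) : X :=
  ‖x‖ ^ (α - 1) • x

lemma rpow_sub_one_mul_le_rpow {a w α : ℝ} (hw : 0 ≤ w) (hwa : w ≤ a) (hα : α ≤ 1) :
    a ^ (α - 1) * w ≤ w ^ α := by
  rcases hw.eq_or_lt with rfl | hw
  · simpa using Real.rpow_nonneg le_rfl α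
  calc a ^ (α - 1) * w ≤ w ^ (α - 1) * w :=
        mul_le_mul_of_nonneg_right (Real.rpow_le_rpow_of_nonpos hw hwa (by linarith)) hw.le
    _ = w ^ α := by rw [← Real.rpow_add_one hw.ne', sub_add_cancel]

lemma one_sub_rpow_le_mul_one_sub {t β : ℝ} (ht0 : 0 ≤ t) (ht1 : t ≤ 1) (hβ : 0 ≤ β) :
    1 - t ^ β ≤ (1 + β) * (1 - t) := by
  rcases le_total β 1 with hβ1 | hβ1
  · have : t ≤ t ^ β := by
      simpa using Real.rpow_le_rpow_of_exponent_ge' ht0 ht1 hβ hβ1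
    nlinarith
  · have bernoulli : 1 + β * (t - 1) ≤ t ^ β := by
      simpa using one_add_mul_self_le_rpow_one_add (by linarith : -1 ≤ t - 1) hβ1
    nlinarith

lemma rpow_sub_rpow_mul_le {a b β : ℝ} (hb : 0 ≤ b) (hba : b ≤ a) (hβ : 0 ≤ β) :
    (a ^ β - b ^ β) * b ≤ (1 + β) * a ^ β * (a - b) := by
  rcases (hb.trans hba).eq_or_lt with ha | ha
  · obtain rfl : b = 0 := le_antisymm (ha ▸ hba) hb
    simp [← ha]
  set t := b / a
  have ht0 : 0 ≤ t := div_nonneg hb ha.le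
  have ht1 : t ≤ 1 := (div_le_one ha).mpr hba
  have hbt : b = t * a := (div_mul_cancel₀ b ha.ne').symm
  have key : (1 - t ^ β) * t ≤ (1 + β) * (1 - t) :=
    (mul_le_of_le_one_right (by simpa using Real.rpow_le_one ht0 ht1 hβ) ht1).trans
      (one_sub_rpow_le_mul_one_sub ht0 ht1 hβ)
  calc (a ^ β - b ^ β) * b = a ^ β * a * ((1 - t ^ β) * t) := by
        rw [hbt, Real.mul_rpow ht0 ha.le]; ring
    _ ≤ a ^ β * a * ((1 + β) * (1 - t)) := by gcongr
    _ = (1 + β) * a ^ β * (a - b) := by rw [hbt]; ring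

section Pointwise

variable {X : Type*} [NormedAddCommGroup X] [NormedSpace ℝ X]

lemma norm_mazurPow_sub_mazurPow_le (α : ℝ) (x y : X) :
    ‖mazurPow α x - mazurPow α y‖
      ≤ ‖x‖ ^ (α - 1) * ‖x - y‖ + |‖x‖ ^ (α - 1) - ‖y‖ ^ (α - 1)| * ‖y‖ := by
  have split : mazurPow α x - mazurPow α y
      = ‖x‖ ^ (α - 1) • (x - y) + (‖x‖ ^ (α - 1) - ‖y‖ ^ (α - 1)) • y := by
    simp only [mazurPow]
    module
  rw [split]
  refine (norm_add_le _ _).trans_eq ?_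
  rw [norm_smul, norm_smul, Real.norm_eq_abs, Real.norm_eq_abs,
    abs_of_nonneg (Real.rpow_nonneg (norm_nonneg x) _)]

lemma norm_mazurPow_sub_mazurPow_le_rpow {α : ℝ} (hα0 : 0 ≤ α) (hα1 : α ≤ 1) (x y : X) :
    ‖mazurPow α x - mazurPow α y‖ ≤ 3 * ‖x - y‖ ^ α := by
  wlog hyx : ‖y‖ ≤ ‖x‖ generalizing x y
  · simpa only [norm_sub_rev] using this y x (le_of_not_ge hyx)
  have hdiff : ‖x‖ - ‖y‖ ≤ ‖x - y‖ := norm_sub_norm_le x y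
  have hxy_term : ‖x‖ ^ (α - 1) * ‖x - y‖ ≤ 2 * ‖x - y‖ ^ α := by
    have hxy2 : ‖x - y‖ ≤ 2 * ‖x‖ := by linarith [norm_sub_le x y]
    have h2 : (1 : ℝ) ≤ 2 * 2 ^ (α - 1) := by
      rw [Real.rpow_sub_one two_ne_zero, mul_div_cancel₀ _ two_ne_zero]
      exact Real.one_le_rpow one_le_two hα0
    calc ‖x‖ ^ (α - 1) * ‖x - y‖ ≤ 2 * (2 ^ (α - 1) * ‖x‖ ^ (α - 1)) * ‖x - y‖ := by
          gcongr
          nlinarith [Real.rpow_nonneg (norm_nonneg x) (α - 1)]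
      _ = 2 * ((2 * ‖x‖) ^ (α - 1) * ‖x - y‖) := by
          rw [Real.mul_rpow zero_le_two (norm_nonneg x)]; ring
      _ ≤ 2 * ‖x - y‖ ^ α := by
          gcongr; exact rpow_sub_one_mul_le_rpow (norm_nonneg _) hxy2 hα1
  have hy_term : |‖x‖ ^ (α - 1) - ‖y‖ ^ (α - 1)| * ‖y‖ ≤ ‖x - y‖ ^ α := by
    rcases (norm_nonneg y).eq_or_lt with hy | hy
    · rw [← hy, mul_zero]; positivity
    have hyα : ‖y‖ ^ (α - 1) * ‖y‖ = ‖y‖ ^ α := by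
      rw [← Real.rpow_add_one hy.ne', sub_add_cancel]
    have hxα : ‖x‖ ^ (α - 1) * ‖x‖ = ‖x‖ ^ α := by
      rw [← Real.rpow_add_one (hy.trans_le hyx).ne', sub_add_cancel]
    rw [abs_sub_comm, abs_of_nonneg (sub_nonneg.mpr
      (Real.rpow_le_rpow_of_nonpos hy hyx (by linarith)))]
    -- expand and use `‖y‖ ^ α ≤ ‖x‖ ^ α = ‖x‖ ^ (α - 1) * ‖x‖`
    calc (‖y‖ ^ (α - 1) - ‖x‖ ^ (α - 1)) * ‖y‖
        ≤ ‖x‖ ^ (α - 1) * (‖x‖ - ‖y‖) := by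
          nlinarith [Real.rpow_le_rpow (norm_nonneg y) hyx hα0]
      _ ≤ (‖x‖ - ‖y‖) ^ α := rpow_sub_one_mul_le_rpow (by linarith) (by linarith) hα1
      _ ≤ ‖x - y‖ ^ α := Real.rpow_le_rpow (by linarith) hdiff hα0
  calc ‖mazurPow α x - mazurPow α y‖
      ≤ ‖x‖ ^ (α - 1) * ‖x - y‖ + |‖x‖ ^ (α - 1) - ‖y‖ ^ (α - 1)| * ‖y‖ :=
        norm_mazurPow_sub_mazurPow_le α x y
    _ ≤ 3 * ‖x - y‖ ^ α := by linarith

lemma norm_mazurPow_sub_mazurPow_le_mul {α : ℝ} (hα : 1 ≤ α) (x y : X) :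
    ‖mazurPow α x - mazurPow α y‖
      ≤ (1 + α) * (‖x‖ ^ (α - 1) + ‖y‖ ^ (α - 1)) * ‖x - y‖ := by
  wlog hyx : ‖y‖ ≤ ‖x‖ generalizing x y
  · simpa only [norm_sub_rev, add_comm (‖x‖ ^ (α - 1))] using this y x (le_of_not_ge hyx)
  have hy_term : |‖x‖ ^ (α - 1) - ‖y‖ ^ (α - 1)| * ‖y‖ ≤ α * ‖x‖ ^ (α - 1) * ‖x - y‖ := by
    rw [abs_of_nonneg (sub_nonneg.mpr
      (Real.rpow_le_rpow (norm_nonneg y) hyx (by linarith)))]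
    calc (‖x‖ ^ (α - 1) - ‖y‖ ^ (α - 1)) * ‖y‖ ≤ (1 + (α - 1)) * ‖x‖ ^ (α - 1) * (‖x‖ - ‖y‖) :=
          rpow_sub_rpow_mul_le (norm_nonneg y) hyx (by linarith)
      _ ≤ α * ‖x‖ ^ (α - 1) * ‖x - y‖ := by
          rw [add_sub_cancel]; gcongr; exact norm_sub_norm_le x y
  calc ‖mazurPow α x - mazurPow α y‖
      ≤ ‖x‖ ^ (α - 1) * ‖x - y‖ + |‖x‖ ^ (α - 1) - ‖y‖ ^ (α - 1)| * ‖y‖ :=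
        norm_mazurPow_sub_mazurPow_le α x y
    _ ≤ (1 + α) * ‖x‖ ^ (α - 1) * ‖x - y‖ := by linarith
    _ ≤ (1 + α) * (‖x‖ ^ (α - 1) + ‖y‖ ^ (α - 1)) * ‖x - y‖ := by
        gcongr
        exact le_add_of_nonneg_right (Real.rpow_nonneg (norm_nonneg y) _)

end Pointwise

section Integral

variable {Ω X : Type*} [MeasurableSpace Ω] {μ : Measure Ω} [NormedAddCommGroup X]

lemma eLpNorm_norm_rpow_le_one {f : Ω → X} {p β : ℝ} (hβ : 0 < β)
    (hf : eLpNorm f (ENNReal.ofReal p) μ ≤ 1) :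
    eLpNorm (fun ω => ‖f ω‖ ^ β) (ENNReal.ofReal (p / β)) μ ≤ 1 := by
  rw [eLpNorm_norm_rpow f hβ, ← ENNReal.ofReal_mul' hβ.le, div_mul_cancel₀ p hβ.ne']
  exact ENNReal.rpow_le_one hf hβ.le

variable [NormedSpace ℝ X]

lemma eLpNorm_mazurPow_sub_le_of_le {p q : ℝ} (hp : 0 < p) (hpq : p ≤ q) (f₁ f₂ : Ω → X) :
    eLpNorm (fun ω => mazurPow (p / q) (f₁ ω) - mazurPow (p / q) (f₂ ω)) (ENNReal.ofReal q) μ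
      ≤ ENNReal.ofReal 3 * eLpNorm (fun ω => f₁ ω - f₂ ω) (ENNReal.ofReal p) μ ^ (p / q) := by
  have hq : 0 < q := hp.trans_le hpq
  have hα : 0 < p / q := div_pos hp hq
  calc eLpNorm (fun ω => mazurPow (p / q) (f₁ ω) - mazurPow (p / q) (f₂ ω)) (ENNReal.ofReal q) μ
      ≤ eLpNorm ((3 : ℝ) • fun ω => ‖f₁ ω - f₂ ω‖ ^ (p / q)) (ENNReal.ofReal q) μ :=
        eLpNorm_mono_real fun ω =>
          norm_mazurPow_sub_mazurPow_le_rpow hα.le ((div_le_one hq).mpr hpq) _ _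
    _ = ENNReal.ofReal 3 * eLpNorm (fun ω => f₁ ω - f₂ ω) (ENNReal.ofReal p) μ ^ (p / q) := by
        rw [eLpNorm_const_smul, eLpNorm_norm_rpow _ hα, ← ENNReal.ofReal_mul hq.le,
          mul_div_cancel₀ p hq.ne', Real.enorm_eq_ofReal zero_le_three]

lemma eLpNorm_mazurPow_sub_le_of_lt {p q : ℝ} (hq : 1 ≤ q) (hqp : q < p) {f₁ f₂ : Ω → X}
    (hf₁ : AEStronglyMeasurable f₁ μ) (hf₂ : AEStronglyMeasurable f₂ μ)
    (hb₁ : eLpNorm f₁ (ENNReal.ofReal p) μ ≤ 1) (hb₂ : eLpNorm f₂ (ENNReal.ofReal p) μ ≤ 1) :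
    eLpNorm (fun ω => mazurPow (p / q) (f₁ ω) - mazurPow (p / q) (f₂ ω)) (ENNReal.ofReal q) μ
      ≤ ENNReal.ofReal (2 * (1 + p / q)) * eLpNorm (fun ω => f₁ ω - f₂ ω) (ENNReal.ofReal p) μ := by
  set α := p / q
  set β := α - 1
  have hq0 : 0 < q := one_pos.trans_le hq
  have hp0 : 0 < p := hq0.trans hqp
  have hβ : 0 < β := by simp only [β, α, sub_pos, one_lt_div hq0, hqp]
  have holder : Real.HolderTriple (p / β) p q :=
    ⟨by simp only [β, α]; field_simp; ring, by positivity, hp0⟩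
  have hr : 1 ≤ p / β := by
    have : α ≤ p := div_le_self hp0.le hq
    exact (one_le_div hβ).mpr (by linarith)
  have hg : ∀ f : Ω → X, AEStronglyMeasurable f μ →
      AEStronglyMeasurable (fun ω => ‖f ω‖ ^ β) μ := fun f hf =>
    (Real.continuous_rpow_const hβ.le).comp_aestronglyMeasurable hf.norm
  set F : Ω → ℝ := (1 + α) • fun ω => ‖f₁ ω‖ ^ β + ‖f₂ ω‖ ^ β
  have hF : eLpNorm F (ENNReal.ofReal (p / β)) μ ≤ ENNReal.ofReal (2 * (1 + α)) := by
    calc eLpNorm F (ENNReal.ofReal (p / β)) μ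
        ≤ ENNReal.ofReal (1 + α) * (eLpNorm (fun ω => ‖f₁ ω‖ ^ β) (ENNReal.ofReal (p / β)) μ
            + eLpNorm (fun ω => ‖f₂ ω‖ ^ β) (ENNReal.ofReal (p / β)) μ) := by
          rw [eLpNorm_const_smul, Real.enorm_eq_ofReal (by positivity)]
          gcongr
          exact eLpNorm_add_le (hg f₁ hf₁) (hg f₂ hf₂) (ENNReal.one_le_ofReal.mpr hr)
      _ ≤ ENNReal.ofReal (1 + α) * (1 + 1) := by
          gcongr <;> exact eLpNorm_norm_rpow_le_one hβ ‹_›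
      _ = ENNReal.ofReal (2 * (1 + α)) := by
          rw [mul_comm 2, ENNReal.ofReal_mul (by positivity), one_add_one_eq_two,
            ENNReal.ofReal_ofNat]
  have := holder.ennrealOfReal
  calc eLpNorm (fun ω => mazurPow α (f₁ ω) - mazurPow α (f₂ ω)) (ENNReal.ofReal q) μ
      ≤ eLpNorm (F • fun ω => f₁ ω - f₂ ω) (ENNReal.ofReal q) μ := by
        refine eLpNorm_mono fun ω => ?_
        have hFω : 0 ≤ F ω := by simp only [F, Pi.smul_apply, smul_eq_mul]; positivity
        rw [Pi.smul_apply', norm_smul, Real.norm_of_nonneg hFω]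
        exact norm_mazurPow_sub_mazurPow_le_mul ((one_lt_div hq0).mpr hqp).le _ _
    _ ≤ eLpNorm F (ENNReal.ofReal (p / β)) μ
          * eLpNorm (fun ω => f₁ ω - f₂ ω) (ENNReal.ofReal p) μ :=
        eLpNorm_smul_le_mul_eLpNorm (hf₁.sub hf₂) (((hg f₁ hf₁).add (hg f₂ hf₂)).const_smul _)
    _ ≤ ENNReal.ofReal (2 * (1 + α)) * eLpNorm (fun ω => f₁ ω - f₂ ω) (ENNReal.ofReal p) μ := by
        gcongr

end Integral

/-- regularity of the vector-valued Mazur map `M_{p,q}(f)(ω) = {f(ω)}^{p/q}`: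
for all `1 ≤ p, q < ∞` there is `C_{p,q} > 0` such that for every measure space, every complex
Banach space `X` and all strongly measurable `f₁, f₂` in the unit ball of `L^p(Ω,μ;X)`,
`‖M_{p,q}(f₁) − M_{p,q}(f₂)‖_{L^q} ≤ C_{p,q} ‖f₁ − f₂‖_{L^p}^{min(p/q,1)}`. -/
theorem stmt7 (p q : ℝ) (hp : 1 ≤ p) (hq : 1 ≤ q) :
    ∃ C : ℝ, 0 < C ∧
      ∀ (Ω : Type) [MeasurableSpace Ω] (μ : Measure Ω)
        (X : Type) [NormedAddCommGroup X] [NormedSpace ℂ X] [CompleteSpace X]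
        (f₁ f₂ : Ω → X),
        StronglyMeasurable f₁ → StronglyMeasurable f₂ →
        eLpNorm f₁ (ENNReal.ofReal p) μ ≤ 1 → eLpNorm f₂ (ENNReal.ofReal p) μ ≤ 1 →
        eLpNorm (fun x => mazurPow (p / q) (f₁ x) - mazurPow (p / q) (f₂ x))
            (ENNReal.ofReal q) μ
          ≤ ENNReal.ofReal C *
              (eLpNorm (fun x => f₁ x - f₂ x) (ENNReal.ofReal p) μ) ^ min (p / q) 1 := by
  have hp0 : 0 < p := one_pos.trans_le hp
  have hq0 : 0 < q := one_pos.trans_le hq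
  refine ⟨3 + 2 * p, by positivity, fun Ω _ μ X _ _ _ f₁ f₂ hf₁ hf₂ hb₁ hb₂ => ?_⟩
  rcases le_or_gt p q with hpq | hqp
  · rw [min_eq_left ((div_le_one hq0).mpr hpq)]
    refine (eLpNorm_mazurPow_sub_le_of_le hp0 hpq f₁ f₂).trans ?_
    gcongr
    linarith
  · rw [min_eq_right ((one_le_div hq0).mpr hqp.le), ENNReal.rpow_one]
    refine (eLpNorm_mazurPow_sub_le_of_lt hq hqp hf₁.aestronglyMeasurable
      hf₂.aestronglyMeasurable hb₁ hb₂).trans ?_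
    gcongr
    linarith [div_le_self hp0.le hq]
end
end

section
/- Let p ∈ [2, ∞) and let 𝒢 = (V, ω) be a connected finite weighted graph with at least two vertices and all degrees positive. Suppose ‖A_𝒢‖_{B(L²_0(V,ν;ℂ))} ≤ ε for some ε ≥ 0 with 2^{1−2/p} ε^{2/p} < 1. Then for every f : V → ℝ, 2 λ · inf_{c∈ℝ} ∑_s ν(s) |f(s) − c|^p ≤ ∑_{s,t} ℙ(s,t) |f(t) − f(s)|^p, where λ = (1 − 2^{1−2/p} ε^{2/p})^p (1/2 + 2^{1−p}). Equivalently, via Bourdon's identity λ_{1,p}(𝒢) = 1/(2 π_{p,𝒢}(ℝ)^p), the smallest positive eigenvalue of the p-Laplacian satisfies λ_{1,p}(𝒢) ≥ (1 − 2^{1−2/p} ε^{2/p})^p (1/2 + 2^{1−p}). -/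
/-! Write `A` for the Markov operator and `E u = ∑ ν u`. Complex interpolation (Hadamard's three
lines) between `‖A - E‖_{∞→∞} ≤ 2` and `‖A - E‖_{2→2} ≤ ε` gives `‖A g‖_p ≤ δ ‖g‖_p` with
`δ = 2^{1-2/p} ε^{2/p}` for mean-zero `g`, hence also `‖A² g‖_p ≤ δ ‖g‖_p`, and by Minkowski both
`‖g - A g‖_p` and `‖g - A² g‖_p` are at least `(1 - δ) ‖g‖_p`.

On the other side, for `p ≥ 2` one has `|a + y|^p ≥ |a|^p + p |a|^{p-2} a y + 2^{2-p} |y|^p`.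
Averaging it over the neighbours `t` of `s` with `a = g s - A g s`, `y = A g s - g t` kills the
linear term, and Jensen together with reversibility `ν s ω s t / d s = ν t ω t s / d t` bounds the
`p`-energy of `g` from below by `‖g - A g‖_p^p + 2^{2-p} ‖g - A² g‖_p^p`. Apply this to
`g = f - ∑ ν f`, using `1 + 2^{2-p} = 2 (1/2 + 2^{1-p})`. -/

open scoped BigOperators
open Finset MeasureTheory

noncomputable section

variable {V : Type*}

lemma monotoneOn_of_forall_hasDerivAt_nonneg {D : Set ℝ} (hD : Convex ℝ D) {φ φ' : ℝ → ℝ}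
    (hφ : ∀ x, HasDerivAt φ (φ' x) x) (hφ' : ∀ x ∈ interior D, 0 ≤ φ' x) : MonotoneOn φ D :=
  monotoneOn_of_hasDerivWithinAt_nonneg hD (fun x _ => (hφ x).continuousAt.continuousWithinAt)
    (fun x _ => (hφ x).hasDerivWithinAt) hφ'

namespace WeightedGraph

open Set

section ScalarInequality

variable {p : ℝ}

lemma one_add_mul_add_rpow_le_one_add_rpow (hp : 2 ≤ p) {t : ℝ} (ht : 0 ≤ t) :
    1 + p * t + t ^ p ≤ (1 + t) ^ p := by
  have hp1 : 1 ≤ p := by linarith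
  have hder : ∀ x : ℝ, HasDerivAt (fun t => (1 + t) ^ p - (1 + p * t + t ^ p))
      (p * (1 + x) ^ (p - 1) - (p + p * x ^ (p - 1))) x := fun x => by
    have h1 := ((hasDerivAt_id' (x := x)).const_add 1).rpow_const (p := p) (Or.inr hp1)
    have h2 := (hasDerivAt_id' (x := x)).rpow_const (p := p) (Or.inr hp1)
    have h3 := ((hasDerivAt_id' (x := x)).const_mul p).const_add 1
    exact (h1.sub (h3.add h2)).congr_deriv (by ring)
  have hmono := monotoneOn_of_forall_hasDerivAt_nonneg (convex_Ici 0) hder fun x hx => by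
    rw [interior_Ici] at hx
    have := Real.add_rpow_le_rpow_add zero_le_one (le_of_lt hx) (by linarith : 1 ≤ p - 1)
    rw [Real.one_rpow] at this
    nlinarith
  have := hmono self_mem_Ici ht ht
  simp only [add_zero, mul_zero, Real.zero_rpow (by linarith : p ≠ 0), Real.one_rpow] at this
  linarith

lemma one_sub_mul_add_mul_rpow_le_one_sub_rpow (hp : 2 ≤ p) {c : ℝ} (hc : c ≤ 1) {u : ℝ}
    (hu0 : 0 ≤ u) (hu1 : u ≤ 1) : 1 - p * u + c * u ^ p ≤ (1 - u) ^ p := by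
  have hp1 : 1 ≤ p := by linarith
  have hder : ∀ x : ℝ, HasDerivAt (fun u => (1 - u) ^ p + p * u - c * u ^ p)
      (p - p * (1 - x) ^ (p - 1) - c * (p * x ^ (p - 1))) x := fun x => by
    have h1 := ((hasDerivAt_id' (x := x)).const_sub 1).rpow_const (p := p) (Or.inr hp1)
    have h2 := (hasDerivAt_id' (x := x)).rpow_const (p := p) (Or.inr hp1)
    have h3 := (hasDerivAt_id' (x := x)).const_mul p
    exact ((h1.add h3).sub (h2.const_mul c)).congr_deriv (by ring)
  have hmono := monotoneOn_of_forall_hasDerivAt_nonneg (convex_Icc 0 1) hder fun x hx => by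
    rw [interior_Icc] at hx
    have e1 : (1 - x) ^ (p - 1) ≤ 1 - x := by
      simpa using Real.rpow_le_rpow_of_exponent_ge (by linarith [hx.2]) (by linarith [hx.1])
        (by linarith : (1:ℝ) ≤ p - 1)
    have e2 : x ^ (p - 1) ≤ x := by
      simpa using Real.rpow_le_rpow_of_exponent_ge hx.1 hx.2.le (by linarith : (1:ℝ) ≤ p - 1)
    have e3 : c * x ^ (p - 1) ≤ x :=
      (mul_le_of_le_one_left (Real.rpow_nonneg hx.1.le _) hc).trans e2
    nlinarith
  have := hmono (left_mem_Icc.mpr zero_le_one) ⟨hu0, hu1⟩ hu0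
  simp only [sub_zero, mul_zero, Real.zero_rpow (by linarith : p ≠ 0), Real.one_rpow] at this
  linarith

lemma rpow_le_two_rpow_mul_add_rpow (hp : 1 ≤ p) {a b : ℝ} (ha : 0 ≤ a) (hb : 0 ≤ b) :
    (a + b) ^ p ≤ 2 ^ (p - 1) * (a ^ p + b ^ p) := by
  lift a to NNReal using ha
  lift b to NNReal using hb
  exact_mod_cast NNReal.rpow_add_le_mul_rpow_add_rpow a b hp

lemma one_sub_mul_add_mul_rpow_le_sub_one_rpow (hp : 2 ≤ p) {u : ℝ} (hu : 1 ≤ u) :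
    1 - p * u + 2 ^ (2 - p) * u ^ p ≤ (u - 1) ^ p := by
  have hp1 : 1 ≤ p := by linarith
  set c : ℝ := 2 ^ (2 - p)
  have hder : ∀ x : ℝ, HasDerivAt (fun u => (u - 1) ^ p + p * u - c * u ^ p)
      (p * (x - 1) ^ (p - 1) + p - c * (p * x ^ (p - 1))) x := fun x => by
    have h1 := ((hasDerivAt_id' (x := x)).sub_const 1).rpow_const (p := p) (Or.inr hp1)
    have h2 := (hasDerivAt_id' (x := x)).rpow_const (p := p) (Or.inr hp1)
    have h3 := (hasDerivAt_id' (x := x)).const_mul p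
    exact ((h1.add h3).sub (h2.const_mul c)).congr_deriv (by ring)
  have hmono := monotoneOn_of_forall_hasDerivAt_nonneg (convex_Ici 1) hder fun x hx => by
    rw [interior_Ici] at hx
    have hx1 : 0 ≤ x - 1 := by linarith [mem_Ioi.mp hx]
    have hmean := rpow_le_two_rpow_mul_add_rpow (by linarith : 1 ≤ p - 1) hx1 zero_le_one
    rw [sub_add_cancel, Real.one_rpow] at hmean
    have hc : c * 2 ^ (p - 1 - 1) = 1 := by
      rw [← Real.rpow_add two_pos, show 2 - p + (p - 1 - 1) = 0 by ring, Real.rpow_zero]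
    have : c * x ^ (p - 1) ≤ (x - 1) ^ (p - 1) + 1 := by
      calc c * x ^ (p - 1) ≤ c * (2 ^ (p - 1 - 1) * ((x - 1) ^ (p - 1) + 1)) :=
            mul_le_mul_of_nonneg_left hmean (by positivity)
        _ = _ := by rw [← mul_assoc, hc, one_mul]
    nlinarith
  have h1 : (fun u => (u - 1) ^ p + p * u - c * u ^ p) 1 = p - c := by
    simp [Real.zero_rpow (by linarith : p ≠ 0)]
  have hc1 : c ≤ 1 := Real.rpow_le_one_of_one_le_of_nonpos one_le_two (by linarith)
  have := hmono self_mem_Ici hu hu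
  simp only at this h1
  linarith

lemma one_add_mul_add_mul_abs_rpow_le (hp : 2 ≤ p) (t : ℝ) :
    1 + p * t + 2 ^ (2 - p) * |t| ^ p ≤ |1 + t| ^ p := by
  have hc1 : (2 : ℝ) ^ (2 - p) ≤ 1 := Real.rpow_le_one_of_one_le_of_nonpos one_le_two (by linarith)
  rcases le_or_gt 0 t with ht | ht
  · rw [abs_of_nonneg ht, abs_of_nonneg (by linarith)]
    have := mul_le_of_le_one_left (Real.rpow_nonneg ht p) hc1
    linarith [one_add_mul_add_rpow_le_one_add_rpow hp ht]
  rw [abs_of_neg ht]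
  rcases le_or_gt (-1) t with ht1 | ht1
  · rw [abs_of_nonneg (by linarith)]
    simpa [sub_eq_add_neg] using
      one_sub_mul_add_mul_rpow_le_one_sub_rpow hp hc1 (u := -t) (by linarith) (by linarith)
  · rw [abs_of_neg (by linarith)]
    simpa [sub_eq_add_neg, add_comm] using
      one_sub_mul_add_mul_rpow_le_sub_one_rpow hp (u := -t) (by linarith)

theorem abs_rpow_add_mul_add_mul_abs_rpow_le (hp : 2 ≤ p) (a y : ℝ) :
    |a| ^ p + p * |a| ^ (p - 2) * a * y + 2 ^ (2 - p) * |y| ^ p ≤ |a + y| ^ p := by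
  have hp0 : p ≠ 0 := by linarith
  rcases eq_or_ne a 0 with rfl | ha
  · simpa [Real.zero_rpow hp0] using
      mul_le_of_le_one_left (Real.rpow_nonneg (abs_nonneg y) p)
        (Real.rpow_le_one_of_one_le_of_nonpos one_le_two (by linarith))
  have ha' : 0 < |a| := abs_pos.mpr ha
  have hpow : |a| ^ p = |a| ^ (p - 2) * a ^ 2 := by
    rw [← sq_abs, ← Real.rpow_two, ← Real.rpow_add ha', sub_add_cancel]
  calc |a| ^ p + p * |a| ^ (p - 2) * a * y + 2 ^ (2 - p) * |y| ^ p
      = |a| ^ p * (1 + p * (y / a) + 2 ^ (2 - p) * |y / a| ^ p) := by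
        have hlin : |a| ^ p * (p * (y / a)) = p * |a| ^ (p - 2) * a * y := by
          rw [hpow]; field_simp
        rw [abs_div, Real.div_rpow (abs_nonneg _) ha'.le, mul_add, mul_add, mul_one, hlin,
          mul_div_assoc', mul_div_assoc', mul_div_cancel_left₀ _ (Real.rpow_pos_of_pos ha' p).ne']
    _ ≤ |a| ^ p * |1 + y / a| ^ p :=
        mul_le_mul_of_nonneg_left (one_add_mul_add_mul_abs_rpow_le hp _) (by positivity)
    _ = |a + y| ^ p := by
        rw [← Real.mul_rpow (abs_nonneg _) (abs_nonneg _), ← abs_mul, mul_add, mul_one,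
          mul_div_cancel₀ _ ha]

end ScalarInequality

section WeightedSums

variable {ι V : Type*} [Fintype ι] [Fintype V] {ω : V → V → ℝ} {p : ℝ}

lemma abs_sum_mul_rpow_le (hp : 1 ≤ p) {w : ι → ℝ} (hw : ∀ i, 0 ≤ w i) (hw1 : ∑ i, w i = 1)
    (z : ι → ℝ) : |∑ i, w i * z i| ^ p ≤ ∑ i, w i * |z i| ^ p := by
  calc |∑ i, w i * z i| ^ p ≤ (∑ i, w i * |z i|) ^ p := by
        gcongr
        refine (abs_sum_le_sum_abs _ _).trans_eq (sum_congr rfl fun i _ => ?_)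
        rw [abs_mul, abs_of_nonneg (hw i)]
    _ ≤ ∑ i, w i * |z i| ^ p :=
        Real.rpow_arith_mean_le_arith_mean_rpow _ _ _ (fun i _ => hw i) hw1
          (fun i _ => abs_nonneg _) hp

lemma lpNormW_rpow {X : Type*} [NormedAddCommGroup X] (hp : p ≠ 0) (hν : ∀ s, 0 ≤ nu ω s)
    (u : V → X) : lpNormW ω p u ^ p = ∑ s, nu ω s * ‖u s‖ ^ p := by
  rw [lpNormW, ← Real.rpow_mul (sum_nonneg fun s _ => mul_nonneg (hν s) (by positivity)),
    one_div_mul_cancel hp, Real.rpow_one]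

lemma lpNormW_nonneg {X : Type*} [NormedAddCommGroup X] (hν : ∀ s, 0 ≤ nu ω s) (u : V → X) :
    0 ≤ lpNormW ω p u :=
  Real.rpow_nonneg (sum_nonneg fun s _ => mul_nonneg (hν s) (Real.rpow_nonneg (norm_nonneg _) _)) _

lemma lpNormW_add_le {X : Type*} [NormedAddCommGroup X] (hp : 1 ≤ p) (hν : ∀ s, 0 ≤ nu ω s)
    (u v : V → X) : lpNormW ω p (u + v) ≤ lpNormW ω p u + lpNormW ω p v := by
  have hp0 : 0 < p := by linarith
  have hν' : ∀ s, 0 ≤ nu ω s ^ (1 / p) := fun s => Real.rpow_nonneg (hν s) _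
  have hweight : ∀ s (x : X), nu ω s * ‖x‖ ^ p = (nu ω s ^ (1 / p) * ‖x‖) ^ p := fun s x => by
    rw [Real.mul_rpow (hν' s) (norm_nonneg _), ← Real.rpow_mul (hν s),
      one_div_mul_cancel hp0.ne', Real.rpow_one]
  calc lpNormW ω p (u + v) = (∑ s, (nu ω s ^ (1 / p) * ‖u s + v s‖) ^ p) ^ (1 / p) := by
        simp only [lpNormW, Pi.add_apply, hweight]
    _ ≤ (∑ s, (nu ω s ^ (1 / p) * ‖u s‖ + nu ω s ^ (1 / p) * ‖v s‖) ^ p) ^ (1 / p) := by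
        gcongr with s
        · exact sum_nonneg fun s _ => Real.rpow_nonneg (mul_nonneg (hν' s) (norm_nonneg _)) _
        · exact mul_nonneg (hν' s) (norm_nonneg _)
        rw [← mul_add]
        exact mul_le_mul_of_nonneg_left (norm_add_le _ _) (hν' s)
    _ ≤ _ := Real.Lp_add_le_of_nonneg univ hp (fun s _ => mul_nonneg (hν' s) (norm_nonneg _))
          (fun s _ => mul_nonneg (hν' s) (norm_nonneg _))
    _ = lpNormW ω p u + lpNormW ω p v := by
        simp only [lpNormW, hweight]

lemma sum_mul_norm_mul_norm_le_lpNormW_two {X Y : Type*} [NormedAddCommGroup X]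
    [NormedAddCommGroup Y] (hν : ∀ s, 0 ≤ nu ω s) (u : V → X) (v : V → Y) :
    ∑ s, nu ω s * (‖u s‖ * ‖v s‖) ≤ lpNormW ω 2 u * lpNormW ω 2 v := by
  have hcs := sum_sq_le_sum_mul_sum_of_sq_le_mul univ
    (r := fun s => nu ω s * (‖u s‖ * ‖v s‖)) (f := fun s => nu ω s * ‖u s‖ ^ 2)
    (g := fun s => nu ω s * ‖v s‖ ^ 2) (fun s _ => mul_nonneg (hν s) (sq_nonneg _))
    (fun s _ => mul_nonneg (hν s) (sq_nonneg _)) (fun s _ => le_of_eq (by ring))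
  simp only [lpNormW, Real.rpow_two, ← Real.sqrt_eq_rpow,
    ← Real.sqrt_mul (sum_nonneg fun s _ => mul_nonneg (hν s) (sq_nonneg _))]
  exact (le_abs_self _).trans (Real.abs_le_sqrt hcs)

end WeightedSums

section SignPow

/-- `sign x * |x| ^ z`, with `x / |x|` as the sign (it is `0` at `x = 0`). -/
def signPow (x : ℝ) (z : ℂ) : ℂ := ((x / |x| : ℝ) : ℂ) * Complex.exp (Real.log |x| * z)

lemma differentiable_signPow (x : ℝ) : Differentiable ℂ (signPow x) := by
  unfold signPow; fun_prop

@[simp] lemma signPow_zero_left (z : ℂ) : signPow 0 z = 0 := by simp [signPow]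

lemma norm_signPow_of_ne_zero {x : ℝ} (hx : x ≠ 0) (z : ℂ) : ‖signPow x z‖ = |x| ^ z.re := by
  rw [signPow, norm_mul, Complex.norm_real, Real.norm_eq_abs, abs_div, abs_abs,
    div_self (abs_ne_zero.mpr hx), one_mul, Complex.norm_exp, Complex.re_ofReal_mul,
    Real.rpow_def_of_pos (abs_pos.mpr hx)]

lemma norm_signPow {z : ℂ} (hz : z.re ≠ 0) (x : ℝ) : ‖signPow x z‖ = |x| ^ z.re := by
  rcases eq_or_ne x 0 with rfl | hx
  · simp [Real.zero_rpow hz]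
  · exact norm_signPow_of_ne_zero hx z

lemma norm_signPow_le (x : ℝ) (z : ℂ) : ‖signPow x z‖ ≤ |x| ^ z.re := by
  rcases eq_or_ne x 0 with rfl | hx
  · simpa using Real.rpow_nonneg le_rfl _
  · exact (norm_signPow_of_ne_zero hx z).le

lemma norm_signPow_le_max {b : ℝ} {z : ℂ} (hz : z.re ∈ Set.Icc 0 b) (x : ℝ) :
    ‖signPow x z‖ ≤ max 1 (|x| ^ b) := by
  refine (norm_signPow_le x z).trans ?_
  rcases le_or_gt 1 |x| with hx | hx
  · exact le_max_of_le_right (Real.rpow_le_rpow_of_exponent_le hx hz.2)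
  · exact le_max_of_le_left (Real.rpow_le_one (abs_nonneg x) hx.le hz.1)

lemma signPow_ofReal (x r : ℝ) : signPow x r = ((x / |x| * |x| ^ r : ℝ) : ℂ) := by
  rcases eq_or_ne x 0 with rfl | hx
  · simp
  · rw [signPow, Complex.ofReal_mul, Real.rpow_def_of_pos (abs_pos.mpr hx), Complex.ofReal_exp,
      Complex.ofReal_mul]

lemma signPow_one (x : ℝ) : signPow x 1 = x := by
  rcases eq_or_ne x 0 with rfl | hx
  · simp
  · rw [← Complex.ofReal_one, signPow_ofReal, Real.rpow_one,
      div_mul_cancel₀ _ (abs_ne_zero.mpr hx)]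

lemma signPow_sub_one_mul {p : ℝ} (hp : p ≠ 0) (x : ℝ) :
    signPow x (p - 1) * x = ((|x| ^ p : ℝ) : ℂ) := by
  rcases eq_or_ne x 0 with rfl | hx
  · simp [Real.zero_rpow hp]
  · have hx' : |x| ≠ 0 := abs_ne_zero.mpr hx
    rw [← Complex.ofReal_one, ← Complex.ofReal_sub, signPow_ofReal, Real.rpow_sub_one hx',
      ← Complex.ofReal_mul]
    congr 1
    field_simp
    rw [sq_abs]

end SignPow

section Interpolation

variable {V : Type*} [Fintype V] {ω : V → V → ℝ} {p : ℝ}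

/-- The Riesz–Thorin interpolant. When `T h = w` its value at `z = 2 / p` is `∑ ν |w|^p`, while on
the lines `re z = 0` and `re z = 1` it is bounded through the `L^∞` and `L²` bounds of `T`. -/
def interpolant (ω : V → V → ℝ) (p : ℝ) (T : (V → ℂ) →ₗ[ℂ] (V → ℂ)) (h w : V → ℝ) (z : ℂ) : ℂ :=
  ∑ s, (nu ω s : ℂ) * (signPow (w s) (p * (1 - z / 2)) * T (fun t => signPow (h t) (p / 2 * z)) s)

variable (T : (V → ℂ) →ₗ[ℂ] (V → ℂ)) (h w : V → ℝ)

lemma differentiable_interpolant : Differentiable ℂ (interpolant ω p T h w) := by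
  have hT : Differentiable ℂ fun z => T (fun t => signPow (h t) (p / 2 * z)) :=
    (LinearMap.toContinuousLinearMap T).differentiable.comp <| differentiable_pi.2 fun t =>
      (differentiable_signPow _).comp (differentiable_id.const_mul _)
  have hw : ∀ s, Differentiable ℂ fun z : ℂ => signPow (w s) (p * (1 - z / 2)) := fun s =>
    (differentiable_signPow _).comp
      ((differentiable_const _).sub (differentiable_id.div_const _) |>.const_mul _)
  exact Differentiable.fun_sum fun s _ => ((hw s).mul (differentiable_pi.1 hT s)).const_mul _

lemma norm_interpolant_le (hν : ∀ s, 0 ≤ nu ω s) (z : ℂ) :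
    ‖interpolant ω p T h w z‖ ≤ ∑ s, nu ω s * (‖signPow (w s) (p * (1 - z / 2))‖ *
      ‖T (fun t => signPow (h t) (p / 2 * z)) s‖) := by
  refine (norm_sum_le _ _).trans_eq (sum_congr rfl fun s _ => ?_)
  rw [norm_mul, norm_mul, Complex.norm_real, Real.norm_eq_abs, abs_of_nonneg (hν s)]

lemma interpolant_two_div (hp : p ≠ 0)
    (hw : T (fun t => (h t : ℂ)) = fun s => (w s : ℂ)) :
    interpolant ω p T h w (2 / p : ℝ) = ((∑ s, nu ω s * ‖w s‖ ^ p : ℝ) : ℂ) := by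
  have hp' : (p : ℂ) ≠ 0 := Complex.ofReal_ne_zero.mpr hp
  have e1 : (p : ℂ) / 2 * ((2 / p : ℝ) : ℂ) = 1 := by push_cast; field_simp
  have e2 : (p : ℂ) * (1 - ((2 / p : ℝ) : ℂ) / 2) = p - 1 := by push_cast; field_simp
  simp only [interpolant, e1, e2, signPow_one, hw, signPow_sub_one_mul hp, Real.norm_eq_abs]
  push_cast
  rfl

lemma norm_interpolant_le_of_re_eq_zero (hp : 0 < p) (hν : ∀ s, 0 ≤ nu ω s) {M₀ : ℝ}
    (hT₀ : ∀ u : V → ℂ, (∀ t, ‖u t‖ ≤ 1) → ∀ s, ‖T u s‖ ≤ M₀) {z : ℂ} (hz : z.re = 0) :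
    ‖interpolant ω p T h w z‖ ≤ M₀ * ∑ s, nu ω s * ‖w s‖ ^ p := by
  have ha : ∀ t, ‖signPow (h t) (p / 2 * z)‖ ≤ 1 := fun t => by
    simpa [hz] using norm_signPow_le (h t) (p / 2 * z)
  have hre : ((p : ℂ) * (1 - z / 2)).re = p := by simp [hz]
  refine (norm_interpolant_le T h w hν z).trans ?_
  rw [mul_sum]
  refine sum_le_sum fun s _ => ?_
  rw [norm_signPow (by rw [hre]; exact hp.ne'), hre, ← mul_assoc, mul_comm M₀]
  exact mul_le_mul_of_nonneg_left (hT₀ _ ha s)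
    (mul_nonneg (hν s) (Real.rpow_nonneg (abs_nonneg _) _))

lemma lpNormW_two_signPow (hp : p ≠ 0) {z : ℂ} (hz : z.re = p / 2) (x : V → ℝ) :
    lpNormW ω 2 (fun s => signPow (x s) z) = (∑ s, nu ω s * ‖x s‖ ^ p) ^ (1 / 2 : ℝ) := by
  unfold lpNormW
  congr 1
  refine sum_congr rfl fun s _ => ?_
  rw [norm_signPow (by rw [hz]; exact div_ne_zero hp two_ne_zero), hz,
    ← Real.rpow_mul (abs_nonneg _), Real.norm_eq_abs, div_mul_cancel₀ _ two_ne_zero]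

lemma norm_interpolant_le_of_re_eq_one (hp : 0 < p) (hν : ∀ s, 0 ≤ nu ω s) {M₁ : ℝ}
    (hT₁ : ∀ u : V → ℂ, lpNormW ω 2 (T u) ≤ M₁ * lpNormW ω 2 u) {z : ℂ}
    (hz : z.re = 1) :
    ‖interpolant ω p T h w z‖ ≤ (∑ s, nu ω s * ‖w s‖ ^ p) ^ (1 / 2 : ℝ) *
      (M₁ * (∑ s, nu ω s * ‖h s‖ ^ p) ^ (1 / 2 : ℝ)) := by
  have hw : ((p : ℂ) * (1 - z / 2)).re = p / 2 := by simp [hz]; ring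
  have hh : ((p : ℂ) / 2 * z).re = p / 2 := by simp [hz]
  calc ‖interpolant ω p T h w z‖
      ≤ lpNormW ω 2 (fun s => signPow (w s) (p * (1 - z / 2))) *
          lpNormW ω 2 (T fun t => signPow (h t) (p / 2 * z)) :=
        (norm_interpolant_le T h w hν z).trans (sum_mul_norm_mul_norm_le_lpNormW_two hν _ _)
    _ ≤ lpNormW ω 2 (fun s => signPow (w s) (p * (1 - z / 2))) *
          (M₁ * lpNormW ω 2 (fun t => signPow (h t) (p / 2 * z))) :=
        mul_le_mul_of_nonneg_left (hT₁ _) (lpNormW_nonneg hν _)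
    _ = _ := by rw [lpNormW_two_signPow hp.ne' hw, lpNormW_two_signPow hp.ne' hh]

lemma bddAbove_norm_interpolant (hp : 0 ≤ p) (hν : ∀ s, 0 ≤ nu ω s) :
    BddAbove ((norm ∘ interpolant ω p T h w) ''
      Complex.HadamardThreeLines.verticalClosedStrip 0 1) := by
  set K := ∑ t, max 1 (|h t| ^ (p / 2))
  refine ⟨∑ s, nu ω s * (max 1 (|w s| ^ p) * (‖LinearMap.toContinuousLinearMap T‖ * K)), ?_⟩
  rintro _ ⟨z, hz, rfl⟩
  obtain ⟨hz0, hz1⟩ : z.re ∈ Set.Icc 0 1 := hz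
  refine (norm_interpolant_le T h w hν z).trans (sum_le_sum fun s _ =>
    mul_le_mul_of_nonneg_left (mul_le_mul ?_ ?_ (norm_nonneg _) (by positivity)) (hν s))
  · refine norm_signPow_le_max ?_ _
    rw [show ((p : ℂ) * (1 - z / 2)).re = p * (1 - z.re / 2) by simp]
    constructor <;> nlinarith
  · have ha : ‖fun t => signPow (h t) (p / 2 * z)‖ ≤ K := by
      refine (pi_norm_le_iff_of_nonneg (by positivity)).2 fun t => ?_
      refine (norm_signPow_le_max ?_ _).trans
        (single_le_sum (f := fun t => max 1 (|h t| ^ (p / 2))) (fun _ _ => by positivity)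
          (mem_univ t))
      rw [show ((p : ℂ) / 2 * z).re = p / 2 * z.re by simp]
      constructor <;> nlinarith
    exact (norm_le_pi_norm _ s).trans
      (((LinearMap.toContinuousLinearMap T).le_opNorm _).trans (by gcongr))

lemma rpow_one_div_le_of_three_lines_bound {M H M₀ M₁ : ℝ} (hM : 0 < M) (hH : 0 ≤ H)
    (hM₀ : 0 ≤ M₀) (hM₁ : 0 ≤ M₁)
    (h : M ≤ (M₀ * M) ^ (1 - 2 / p) * (M ^ (1 / 2 : ℝ) * (M₁ * H ^ (1 / 2 : ℝ))) ^ (2 / p)) :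
    M ^ (1 / p) ≤ M₀ ^ (1 - 2 / p) * M₁ ^ (2 / p) * H ^ (1 / p) := by
  rw [Real.mul_rpow hM₀ hM.le, Real.mul_rpow (by positivity) (by positivity),
    Real.mul_rpow hM₁ (by positivity), ← Real.rpow_mul hM.le, ← Real.rpow_mul hH,
    show 1 / 2 * (2 / p) = 1 / p by ring] at h
  refine le_of_mul_le_mul_left ?_ (Real.rpow_pos_of_pos hM (1 - 1 / p))
  calc M ^ (1 - 1 / p) * M ^ (1 / p) = M := by rw [← Real.rpow_add hM]; simp
    _ ≤ _ := h
    _ = _ := by rw [show 1 - 1 / p = 1 - 2 / p + 1 / p by ring, Real.rpow_add hM]; ring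

theorem lpNormW_le_of_interpolation (hp : 2 ≤ p) (hν : ∀ s, 0 ≤ nu ω s) {M₀ M₁ : ℝ}
    (hM₀ : 0 ≤ M₀) (hM₁ : 0 ≤ M₁)
    (hT₀ : ∀ u : V → ℂ, (∀ t, ‖u t‖ ≤ 1) → ∀ s, ‖T u s‖ ≤ M₀)
    (hT₁ : ∀ u : V → ℂ, lpNormW ω 2 (T u) ≤ M₁ * lpNormW ω 2 u) {h w : V → ℝ}
    (hw : T (fun t => (h t : ℂ)) = fun s => (w s : ℂ)) :
    lpNormW ω p w ≤ M₀ ^ (1 - 2 / p) * M₁ ^ (2 / p) * lpNormW ω p h := by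
  have hp0 : 0 < p := by linarith
  have hM : 0 ≤ ∑ s, nu ω s * ‖w s‖ ^ p :=
    sum_nonneg fun s _ => mul_nonneg (hν s) (Real.rpow_nonneg (norm_nonneg _) _)
  rcases hM.eq_or_lt with hM0 | hMpos
  · rw [lpNormW, ← hM0, Real.zero_rpow (by positivity)]
    exact mul_nonneg (by positivity) (lpNormW_nonneg hν h)
  have hθ : ((2 / p : ℝ) : ℂ) ∈ Complex.HadamardThreeLines.verticalClosedStrip 0 1 := by
    show Complex.re _ ∈ Set.Icc (0 : ℝ) 1
    rw [Complex.ofReal_re]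
    exact ⟨by positivity, (div_le_one hp0).2 hp⟩
  have key := Complex.HadamardThreeLines.norm_le_interp_of_mem_verticalClosedStrip₀₁'
    (interpolant ω p T h w) hθ (differentiable_interpolant T h w).diffContOnCl
    (bddAbove_norm_interpolant T h w hp0.le hν)
    (fun z hz => norm_interpolant_le_of_re_eq_zero T h w hp0 hν hT₀ hz)
    (fun z hz => norm_interpolant_le_of_re_eq_one T h w hp0 hν hT₁ hz)
  rw [interpolant_two_div T h w hp0.ne' hw, Complex.norm_real, Real.norm_of_nonneg hM,
    Complex.ofReal_re] at key
  exact rpow_one_div_le_of_three_lines_bound hMpos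
    (sum_nonneg fun s _ => mul_nonneg (hν s) (Real.rpow_nonneg (norm_nonneg _) _)) hM₀ hM₁ key

end Interpolation

section Graph

variable {V : Type*} [Fintype V] {ω : V → V → ℝ}

lemma nu_nonneg (hdeg : ∀ s, 0 < wdeg ω s) (s : V) : 0 ≤ nu ω s :=
  div_nonneg (hdeg s).le (sum_nonneg fun t _ => (hdeg t).le)

lemma sum_nu [Nonempty V] (hdeg : ∀ s, 0 < wdeg ω s) : ∑ s, nu ω s = 1 := by
  simp only [nu, ← sum_div]
  exact div_self (sum_pos (fun s _ => hdeg s) univ_nonempty).ne'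

lemma sum_edgeP_right (s : V) : ∑ t, edgeP ω s t = nu ω s := by
  simp only [edgeP, nu, ← sum_div, wdeg]

lemma edgeP_comm (hsym : SymmW ω) (s t : V) : edgeP ω s t = edgeP ω t s := by
  rw [edgeP, edgeP, hsym]

lemma edgeP_eq_nu_mul (hdeg : ∀ s, 0 < wdeg ω s) (s t : V) :
    edgeP ω s t = nu ω s * (ω s t / wdeg ω s) := by
  rw [edgeP, nu, div_mul_div_comm, mul_comm (∑ u, wdeg ω u), mul_div_mul_left _ _ (hdeg s).ne']
  rfl

lemma sum_div_wdeg (hdeg : ∀ s, 0 < wdeg ω s) (s : V) : ∑ t, ω s t / wdeg ω s = 1 := by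
  rw [← sum_div, ← wdeg, div_self (hdeg s).ne']

lemma markovW_eq_sum (f : V → ℝ) (s : V) : markovW ω f s = ∑ t, ω s t / wdeg ω s * f t := by
  simp only [markovW, smul_eq_mul, mul_sum, div_eq_inv_mul, mul_assoc]

lemma markovW_ofReal (f : V → ℝ) (s : V) :
    markovW ω (fun t => (f t : ℂ)) s = ((markovW ω f s : ℝ) : ℂ) := by
  simp only [markovW, Complex.real_smul, smul_eq_mul]
  push_cast
  rfl

lemma markovW_sub_const (hdeg : ∀ s, 0 < wdeg ω s) (u : V → ℂ) (c : ℂ) (s : V) :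
    markovW ω (fun t => u t - c) s = markovW ω u s - c := by
  simp only [markovW, smul_sub, sum_sub_distrib, ← sum_smul, smul_smul]
  rw [← wdeg, inv_mul_cancel₀ (hdeg s).ne', one_smul]

lemma norm_markovW_le {X : Type*} [NormedAddCommGroup X] [NormedSpace ℝ X] (hnn : NonnegW ω)
    (hdeg : ∀ s, 0 < wdeg ω s) {u : V → X} {K : ℝ} (hu : ∀ t, ‖u t‖ ≤ K) (s : V) :
    ‖markovW ω u s‖ ≤ K := by
  have hd : 0 ≤ (wdeg ω s)⁻¹ := inv_nonneg.mpr (hdeg s).le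
  calc ‖markovW ω u s‖ ≤ (wdeg ω s)⁻¹ * ∑ t, ω s t * K := by
        rw [markovW, norm_smul, Real.norm_of_nonneg hd]
        refine mul_le_mul_of_nonneg_left ((norm_sum_le _ _).trans (sum_le_sum fun t _ => ?_)) hd
        rw [norm_smul, Real.norm_of_nonneg (hnn s t)]
        exact mul_le_mul_of_nonneg_left (hu t) (hnn s t)
    _ = K := by rw [← sum_mul, ← wdeg, ← mul_assoc, inv_mul_cancel₀ (hdeg s).ne', one_mul]

lemma sum_nu_mul_markovW (hsym : SymmW ω) (hdeg : ∀ s, 0 < wdeg ω s) (f : V → ℝ) :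
    ∑ s, nu ω s * markovW ω f s = ∑ s, nu ω s * f s := by
  calc ∑ s, nu ω s * markovW ω f s = ∑ s, ∑ t, edgeP ω s t * f t := by
        simp only [markovW_eq_sum, mul_sum, edgeP_eq_nu_mul hdeg, mul_assoc]
    _ = ∑ t, (∑ s, edgeP ω t s) * f t := by
        rw [sum_comm]; simp only [sum_mul, edgeP_comm hsym]
    _ = ∑ s, nu ω s * f s := by simp only [sum_edgeP_right]

lemma lpNormW_two_sub_mean_le [Nonempty V] (hdeg : ∀ s, 0 < wdeg ω s) (u : V → ℂ) :
    lpNormW ω 2 (fun s => u s - ∑ t, (nu ω t : ℂ) * u t) ≤ lpNormW ω 2 u := by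
  set m : ℂ := ∑ t, (nu ω t : ℂ) * u t
  have hcross : ∑ s, nu ω s * (u s * (starRingEnd ℂ) m).re = Complex.normSq m := by
    calc ∑ s, nu ω s * (u s * (starRingEnd ℂ) m).re = (m * (starRingEnd ℂ) m).re := by
          simp only [m, ← Complex.re_ofReal_mul, ← Complex.re_sum, ← mul_assoc, ← sum_mul]
      _ = Complex.normSq m := by rw [Complex.mul_conj, Complex.ofReal_re]
  have hsq : ∀ x : ℂ, ‖x‖ ^ (2 : ℝ) = Complex.normSq x := fun x => by
    rw [Real.rpow_two, Complex.sq_norm]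
  have hvar : ∑ s, nu ω s * ‖u s - m‖ ^ (2 : ℝ) =
      ∑ s, nu ω s * ‖u s‖ ^ (2 : ℝ) - Complex.normSq m := by
    simp only [hsq, Complex.normSq_sub, mul_sub, mul_add, sum_sub_distrib, sum_add_distrib,
      ← sum_mul, sum_nu hdeg, one_mul]
    simp only [mul_left_comm _ (2 : ℝ), ← mul_sum, hcross]
    ring
  exact Real.rpow_le_rpow (sum_nonneg fun s _ => mul_nonneg (nu_nonneg hdeg s) (by positivity))
    (by rw [hvar]; linarith [Complex.normSq_nonneg m]) (by norm_num)

end Graph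

section CenteredMarkov

variable {V : Type*} [Fintype V] {ω : V → V → ℝ}

/-- `A - E` with `E u = ∑ ν u`: its norm on `L²` is the norm of `A` on `L²₀`. -/
def centeredMarkov (ω : V → V → ℝ) : (V → ℂ) →ₗ[ℂ] (V → ℂ) where
  toFun u s := markovW ω u s - ∑ t, (nu ω t : ℂ) * u t
  map_add' u v := by
    ext s
    simp only [markovW, Pi.add_apply, smul_add, sum_add_distrib, mul_add]
    ring
  map_smul' c u := by
    ext s
    simp only [markovW, Pi.smul_apply, smul_eq_mul, RingHom.id_apply, mul_sub, mul_sum,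
      Complex.real_smul]
    congr 1 <;> exact sum_congr rfl fun t _ => by ring

lemma norm_centeredMarkov_le [Nonempty V] (hnn : NonnegW ω) (hdeg : ∀ s, 0 < wdeg ω s)
    {u : V → ℂ} (hu : ∀ t, ‖u t‖ ≤ 1) (s : V) : ‖centeredMarkov ω u s‖ ≤ 2 := by
  have hmean : ‖∑ t, (nu ω t : ℂ) * u t‖ ≤ 1 := by
    refine (norm_sum_le _ _).trans ?_
    calc ∑ t, ‖(nu ω t : ℂ) * u t‖ ≤ ∑ t, nu ω t := sum_le_sum fun t _ => by
          rw [norm_mul, Complex.norm_real, Real.norm_of_nonneg (nu_nonneg hdeg t)]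
          exact mul_le_of_le_one_right (nu_nonneg hdeg t) (hu t)
      _ = 1 := sum_nu hdeg
  calc ‖centeredMarkov ω u s‖ ≤ 1 + 1 :=
        (norm_sub_le _ _).trans (add_le_add (norm_markovW_le hnn hdeg hu s) hmean)
    _ = 2 := one_add_one_eq_two

lemma lpNormW_centeredMarkov_le [Nonempty V] (hdeg : ∀ s, 0 < wdeg ω s) {ε : ℝ} (hε : 0 ≤ ε)
    (hA : ∀ f : V → ℂ, (∑ s, (nu ω s : ℂ) * f s) = 0 →
      lpNormW ω 2 (markovW ω f) ≤ ε * lpNormW ω 2 f) (u : V → ℂ) :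
    lpNormW ω 2 (centeredMarkov ω u) ≤ ε * lpNormW ω 2 u := by
  set m : ℂ := ∑ t, (nu ω t : ℂ) * u t
  have hm : ∑ s, (nu ω s : ℂ) * (u s - m) = 0 := by
    simp only [mul_sub, sum_sub_distrib, ← sum_mul, ← Complex.ofReal_sum, sum_nu hdeg,
      Complex.ofReal_one, one_mul, m, sub_self]
  have hAu : centeredMarkov ω u = markovW ω fun t => u t - m :=
    funext fun s => (markovW_sub_const hdeg u m s).symm
  rw [hAu]
  exact (hA _ hm).trans (mul_le_mul_of_nonneg_left (lpNormW_two_sub_mean_le hdeg u) hε)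

lemma centeredMarkov_ofReal {g : V → ℝ} (hg : ∑ s, nu ω s * g s = 0) :
    centeredMarkov ω (fun t => (g t : ℂ)) = fun s => ((markovW ω g s : ℝ) : ℂ) := by
  funext s
  have hmean : ∑ t, (nu ω t : ℂ) * (g t : ℂ) = 0 := by exact_mod_cast hg
  simp only [centeredMarkov, LinearMap.coe_mk, AddHom.coe_mk, hmean, sub_zero, markovW_ofReal]

theorem lpNormW_markovW_le [Nonempty V] {p : ℝ} (hp : 2 ≤ p) (hnn : NonnegW ω)
    (hdeg : ∀ s, 0 < wdeg ω s) {ε : ℝ} (hε : 0 ≤ ε)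
    (hA : ∀ f : V → ℂ, (∑ s, (nu ω s : ℂ) * f s) = 0 →
      lpNormW ω 2 (markovW ω f) ≤ ε * lpNormW ω 2 f)
    {g : V → ℝ} (hg : ∑ s, nu ω s * g s = 0) :
    lpNormW ω p (markovW ω g) ≤ 2 ^ (1 - 2 / p) * ε ^ (2 / p) * lpNormW ω p g :=
  lpNormW_le_of_interpolation (centeredMarkov ω) hp (nu_nonneg hdeg) zero_le_two hε
    (fun _ hu s => norm_centeredMarkov_le hnn hdeg hu s) (lpNormW_centeredMarkov_le hdeg hε hA)
    (centeredMarkov_ofReal hg)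

end CenteredMarkov

section Poincare

variable {ι V : Type*} [Fintype ι] [Fintype V] {ω : V → V → ℝ} {p : ℝ}

theorem abs_sub_rpow_bias_variance_le (hp : 2 ≤ p) {μ : ι → ℝ} (hμ : ∀ i, 0 ≤ μ i)
    (hμ1 : ∑ i, μ i = 1) (g : ι → ℝ) (b : ℝ) :
    |b - ∑ i, μ i * g i| ^ p + 2 ^ (2 - p) * ∑ i, μ i * |∑ j, μ j * g j - g i| ^ p
      ≤ ∑ i, μ i * |b - g i| ^ p := by
  set m := ∑ i, μ i * g i
  -- the linear term of the Taylor bound averages out since `m` is the `μ`-mean of `g`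
  have hlin : ∑ i, μ i * (p * |b - m| ^ (p - 2) * (b - m) * (m - g i)) = 0 := by
    simp only [mul_left_comm (μ _), ← mul_sum, mul_sub, sum_sub_distrib, ← sum_mul, hμ1,
      one_mul, m, sub_self]
  calc |b - m| ^ p + 2 ^ (2 - p) * ∑ i, μ i * |m - g i| ^ p
      = ∑ i, μ i * (|b - m| ^ p + p * |b - m| ^ (p - 2) * (b - m) * (m - g i)
          + 2 ^ (2 - p) * |m - g i| ^ p) := by
        simp only [mul_add, sum_add_distrib, hlin, ← sum_mul, hμ1, mul_sum]
        ring_nf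
    _ ≤ ∑ i, μ i * |b - g i| ^ p := sum_le_sum fun i _ => mul_le_mul_of_nonneg_left (by
        simpa using abs_rpow_add_mul_add_mul_abs_rpow_le hp (b - m) (m - g i)) (hμ i)

lemma sum_nu_mul_abs_markovW_markovW_sub_rpow_le (hp : 1 ≤ p) (hsym : SymmW ω)
    (hnn : NonnegW ω) (hdeg : ∀ s, 0 < wdeg ω s) (g : V → ℝ) :
    ∑ t, nu ω t * |markovW ω (markovW ω g) t - g t| ^ p
      ≤ ∑ s, ∑ t, edgeP ω s t * |markovW ω g s - g t| ^ p := by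
  rw [sum_comm]
  refine sum_le_sum fun t _ => ?_
  have hjensen := abs_sum_mul_rpow_le hp (fun s => div_nonneg (hnn t s) (hdeg t).le)
    (sum_div_wdeg hdeg t) fun s => markovW ω g s - g t
  have hmean : ∑ s, ω t s / wdeg ω t * (markovW ω g s - g t)
      = markovW ω (markovW ω g) t - g t := by
    simp only [mul_sub, sum_sub_distrib, ← sum_mul, sum_div_wdeg hdeg, one_mul, markovW_eq_sum]
  rw [hmean] at hjensen
  simpa only [edgeP_comm hsym _ t, edgeP_eq_nu_mul hdeg, mul_assoc, ← mul_sum] using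
    mul_le_mul_of_nonneg_left hjensen (nu_nonneg hdeg t)

theorem sum_nu_abs_sub_markovW_rpow_add_le (hp : 2 ≤ p) (hsym : SymmW ω) (hnn : NonnegW ω)
    (hdeg : ∀ s, 0 < wdeg ω s) (g : V → ℝ) :
    ∑ s, nu ω s * |g s - markovW ω g s| ^ p
        + 2 ^ (2 - p) * ∑ s, nu ω s * |g s - markovW ω (markovW ω g) s| ^ p
      ≤ ∑ s, ∑ t, edgeP ω s t * |g t - g s| ^ p := by
  have hvertex : ∀ s, nu ω s * |g s - markovW ω g s| ^ p
      + 2 ^ (2 - p) * ∑ t, edgeP ω s t * |markovW ω g s - g t| ^ p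
      ≤ ∑ t, edgeP ω s t * |g s - g t| ^ p := fun s => by
    have h := mul_le_mul_of_nonneg_left (abs_sub_rpow_bias_variance_le hp
      (fun t => div_nonneg (hnn s t) (hdeg s).le) (sum_div_wdeg hdeg s) g (g s)) (nu_nonneg hdeg s)
    rw [← markovW_eq_sum g s] at h
    simp only [edgeP_eq_nu_mul hdeg, mul_add, mul_sum, mul_assoc, mul_left_comm (nu ω s)] at h ⊢
    exact h
  calc ∑ s, nu ω s * |g s - markovW ω g s| ^ p
        + 2 ^ (2 - p) * ∑ s, nu ω s * |g s - markovW ω (markovW ω g) s| ^ p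
      ≤ ∑ s, nu ω s * |g s - markovW ω g s| ^ p
        + 2 ^ (2 - p) * ∑ s, ∑ t, edgeP ω s t * |markovW ω g s - g t| ^ p := by
        gcongr _ + _ * ?_
        simpa only [abs_sub_comm (g _)] using
          sum_nu_mul_abs_markovW_markovW_sub_rpow_le (by linarith) hsym hnn hdeg g
    _ ≤ ∑ s, ∑ t, edgeP ω s t * |g s - g t| ^ p := by
        simpa only [sum_add_distrib, mul_sum] using sum_le_sum fun s _ => hvertex s
    _ = ∑ s, ∑ t, edgeP ω s t * |g t - g s| ^ p :=
        sum_congr rfl fun s _ => sum_congr rfl fun t _ => by rw [abs_sub_comm]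

lemma one_sub_mul_lpNormW_le_lpNormW_sub (hp : 1 ≤ p) (hν : ∀ s, 0 ≤ nu ω s) {g b : V → ℝ}
    {δ : ℝ} (hb : lpNormW ω p b ≤ δ * lpNormW ω p g) :
    (1 - δ) * lpNormW ω p g ≤ lpNormW ω p (g - b) := by
  have := lpNormW_add_le hp hν (g - b) b
  rw [sub_add_cancel] at this
  linarith

theorem poincare_of_lpNormW_markovW_le (hp : 2 ≤ p) (hsym : SymmW ω) (hnn : NonnegW ω)
    (hdeg : ∀ s, 0 < wdeg ω s) {δ : ℝ} (hδ0 : 0 ≤ δ) (hδ1 : δ ≤ 1)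
    (hcontr : ∀ g : V → ℝ, ∑ s, nu ω s * g s = 0 →
      lpNormW ω p (markovW ω g) ≤ δ * lpNormW ω p g)
    {g : V → ℝ} (hg : ∑ s, nu ω s * g s = 0) :
    (1 - δ) ^ p * (1 + 2 ^ (2 - p)) * ∑ s, nu ω s * |g s| ^ p
      ≤ ∑ s, ∑ t, edgeP ω s t * |g t - g s| ^ p := by
  have hp0 : 0 < p := by linarith
  have hν := nu_nonneg hdeg
  have hlower : ∀ b : V → ℝ, lpNormW ω p b ≤ δ * lpNormW ω p g →
      (1 - δ) ^ p * ∑ s, nu ω s * |g s| ^ p ≤ ∑ s, nu ω s * |g s - b s| ^ p := fun b hb => by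
    have h := Real.rpow_le_rpow (mul_nonneg (by linarith) (lpNormW_nonneg hν g))
      (one_sub_mul_lpNormW_le_lpNormW_sub (by linarith) hν hb) hp0.le
    rwa [Real.mul_rpow (by linarith) (lpNormW_nonneg hν g), lpNormW_rpow hp0.ne' hν,
      lpNormW_rpow hp0.ne' hν] at h
  have hAg := hcontr g hg
  have hAAg : lpNormW ω p (markovW ω (markovW ω g)) ≤ δ * lpNormW ω p g :=
    calc lpNormW ω p (markovW ω (markovW ω g)) ≤ δ * lpNormW ω p (markovW ω g) :=
          hcontr _ ((sum_nu_mul_markovW hsym hdeg g).trans hg)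
      _ ≤ δ * (δ * lpNormW ω p g) := mul_le_mul_of_nonneg_left hAg hδ0
      _ ≤ δ * lpNormW ω p g := mul_le_of_le_one_left (mul_nonneg hδ0 (lpNormW_nonneg hν g)) hδ1
  calc (1 - δ) ^ p * (1 + 2 ^ (2 - p)) * ∑ s, nu ω s * |g s| ^ p
      = (1 - δ) ^ p * ∑ s, nu ω s * |g s| ^ p
        + 2 ^ (2 - p) * ((1 - δ) ^ p * ∑ s, nu ω s * |g s| ^ p) := by ring
    _ ≤ ∑ s, nu ω s * |g s - markovW ω g s| ^ p
        + 2 ^ (2 - p) * ∑ s, nu ω s * |g s - markovW ω (markovW ω g) s| ^ p := by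
        gcongr
        exacts [hlower _ hAg, hlower _ hAAg]
    _ ≤ _ := sum_nu_abs_sub_markovW_rpow_add_le hp hsym hnn hdeg g

end Poincare

end WeightedGraph

open WeightedGraph

theorem stmt8_general (p : ℝ) (hp : 2 ≤ p)
    {V : Type*} [Fintype V] (hV : 1 < Fintype.card V)
    (ω : V → V → ℝ) (hsym : SymmW ω) (hnn : NonnegW ω)
    (hdeg : ∀ s, 0 < wdeg ω s)
    (ε : ℝ) (hε : 0 ≤ ε)
    (hsmall : (2 : ℝ) ^ (1 - 2 / p) * ε ^ (2 / p) < 1)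
    (hA : ∀ f : V → ℂ, (∑ s, (nu ω s : ℂ) * f s) = 0 →
      lpNormW ω 2 (markovW ω f) ≤ ε * lpNormW ω 2 f)
    (f : V → ℝ) :
    2 * ((1 - (2 : ℝ) ^ (1 - 2 / p) * ε ^ (2 / p)) ^ p * (1 / 2 + (2 : ℝ) ^ (1 - p))) *
        (⨅ c : ℝ, ∑ s, nu ω s * |f s - c| ^ p)
      ≤ ∑ s, ∑ t, edgeP ω s t * |f t - f s| ^ p := by
  have : Nonempty V := Fintype.card_pos_iff.mp (by omega)
  set δ := (2 : ℝ) ^ (1 - 2 / p) * ε ^ (2 / p)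
  set g : V → ℝ := fun s => f s - ∑ t, nu ω t * f t
  have hg : ∑ s, nu ω s * g s = 0 := by
    simp only [g, mul_sub, sum_sub_distrib, ← sum_mul, sum_nu hdeg, one_mul, sub_self]
  have hpoincare := poincare_of_lpNormW_markovW_le hp hsym hnn hdeg (by positivity) hsmall.le
    (fun _ hg => lpNormW_markovW_le hp hnn hdeg hε hA hg) hg
  have hinf : (⨅ c : ℝ, ∑ s, nu ω s * |f s - c| ^ p) ≤ ∑ s, nu ω s * |g s| ^ p :=
    ciInf_le ⟨0, Set.forall_mem_range.2 fun c =>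
      sum_nonneg fun s _ => mul_nonneg (nu_nonneg hdeg s) (by positivity)⟩ _
  have hcoeff : 2 * ((1 - δ) ^ p * (1 / 2 + 2 ^ (1 - p))) = (1 - δ) ^ p * (1 + 2 ^ (2 - p)) := by
    rw [show (2 : ℝ) - p = 1 + (1 - p) by ring, Real.rpow_add two_pos, Real.rpow_one]
    ring
  calc 2 * ((1 - δ) ^ p * (1 / 2 + 2 ^ (1 - p))) * (⨅ c : ℝ, ∑ s, nu ω s * |f s - c| ^ p)
      ≤ (1 - δ) ^ p * (1 + 2 ^ (2 - p)) * ∑ s, nu ω s * |g s| ^ p := by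
        rw [hcoeff]
        exact mul_le_mul_of_nonneg_left hinf
          (mul_nonneg (Real.rpow_nonneg (by linarith) _) (by positivity))
    _ ≤ ∑ s, ∑ t, edgeP ω s t * |g t - g s| ^ p := hpoincare
    _ = ∑ s, ∑ t, edgeP ω s t * |f t - f s| ^ p := by simp only [g, sub_sub_sub_cancel_right]

/-- if `‖A‖_{B(L²_0)} ≤ ε` with `2^{1−2/p} ε^{2/p} < 1`, then for every `f : V → ℝ`,
`2λ · inf_c ∑ ν(s)|f(s) − c|^p ≤ ∑ ℙ(s,t)|f(t) − f(s)|^p` with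
`λ = (1 − 2^{1−2/p} ε^{2/p})^p (1/2 + 2^{1−p})` (i.e. `λ_{1,p}(𝒢) ≥ λ`). -/
theorem stmt8 (p : ℝ) (hp : 2 ≤ p)
    {V : Type*} [Fintype V] (hV : 1 < Fintype.card V)
    (ω : V → V → ℝ) (hsym : SymmW ω) (hnn : NonnegW ω) (hconn : ConnW ω)
    (hdeg : ∀ s, 0 < wdeg ω s)
    (ε : ℝ) (hε : 0 ≤ ε)
    (hsmall : (2 : ℝ) ^ (1 - 2 / p) * ε ^ (2 / p) < 1)
    (hA : ∀ f : V → ℂ, (∑ s, (nu ω s : ℂ) * f s) = 0 →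
      lpNormW ω 2 (markovW ω f) ≤ ε * lpNormW ω 2 f)
    (f : V → ℝ) :
    2 * ((1 - (2 : ℝ) ^ (1 - 2 / p) * ε ^ (2 / p)) ^ p * (1 / 2 + (2 : ℝ) ^ (1 - p))) *
        (⨅ c : ℝ, ∑ s, nu ω s * |f s - c| ^ p)
      ≤ ∑ s, ∑ t, edgeP ω s t * |f t - f s| ^ p :=
  stmt8_general p hp hV ω hsym hnn hdeg ε hε hsmall hA f
end
end
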